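/- arXiv:2503.14116 — 6 statements merged into one kernel-verified Lean document; each statement's English description precedes it below -/
import Mathlib

section
/- Let A_ρ ⊆ M_n(ℂ) be a structural matrix algebra and let r ∈ {1,…,n}. An idempotent P ∈ A_ρ has rank r if and only if there exist mutually orthogonal rank-one idempotents Q₁,…,Q_r ∈ A_ρ with P = Q₁ + ⋯ + Q_r. Moreover, if S ⊆ [n] and every nonzero entry of P lies in S × S, then the Q_j can be chosen so that every nonzero entry of each Q_j lies in S × S. -/
/-- The structural matrix algebra determined by a quasi-order `ρ` on `Fin n`. -/
def structuralMatrixAlgebra {n : ℕ} (ρ : Fin n → Fin n → Prop) :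
    Set (Matrix (Fin n) (Fin n) ℂ) :=
  {X | ∀ i j, ¬ ρ i j → X i j = 0}

open Matrix Module

section Aux

private lemma myRankZeroIff {n : ℕ} (A : Matrix (Fin n) (Fin n) ℂ) : A.rank = 0 ↔ A = 0 := by
  constructor
  · intro h
    rw [Matrix.rank, Submodule.finrank_eq_zero, LinearMap.range_eq_bot] at h
    ext i j
    have := congrFun (congrArg (fun f => f.toFun) h) (Pi.single j 1)
    have h2 := congrFun this i
    simpa [Matrix.mulVecLin_apply, Matrix.mulVec_single] using h2
  · rintro rfl; simp

private lemma rank_add_orth {n : ℕ} (A B : Matrix (Fin n) (Fin n) ℂ)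
    (hA : A * A = A) (hB : B * B = B) (hAB : A * B = 0) (hBA : B * A = 0) :
    (A + B).rank = A.rank + B.rank := by
  have hsup : LinearMap.range (A + B).mulVecLin
      = LinearMap.range A.mulVecLin ⊔ LinearMap.range B.mulVecLin := by
    apply le_antisymm
    · rintro x ⟨w, rfl⟩
      have : (A + B).mulVecLin w = A.mulVecLin w + B.mulVecLin w := by
        simp [Matrix.add_mulVec]
      rw [this]
      exact Submodule.add_mem_sup ⟨w, rfl⟩ ⟨w, rfl⟩
    · apply sup_le
      · rintro x ⟨w, rfl⟩
        refine ⟨A.mulVecLin w, ?_⟩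
        simp only [Matrix.mulVecLin_apply, Matrix.mulVec_mulVec, add_mul, hA, hBA, add_zero]
      · rintro x ⟨w, rfl⟩
        refine ⟨B.mulVecLin w, ?_⟩
        simp only [Matrix.mulVecLin_apply, Matrix.mulVec_mulVec, add_mul, hB, hAB, zero_add]
  have hinf : LinearMap.range A.mulVecLin ⊓ LinearMap.range B.mulVecLin = ⊥ := by
    rw [eq_bot_iff]
    rintro x ⟨⟨a, ha⟩, ⟨b, hb⟩⟩
    have hxa : A *ᵥ x = x := by
      rw [← ha]; simp only [Matrix.mulVecLin_apply, Matrix.mulVec_mulVec, hA]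
    have hxb : B *ᵥ x = x := by
      rw [← hb]; simp only [Matrix.mulVecLin_apply, Matrix.mulVec_mulVec, hB]
    have : x = 0 := by
      conv_lhs => rw [← hxa, ← hxb]
      rw [Matrix.mulVec_mulVec, hAB, Matrix.zero_mulVec]
    simp [this]
  have := Submodule.finrank_sup_add_finrank_inf_eq
    (LinearMap.range A.mulVecLin) (LinearMap.range B.mulVecLin)
  rw [hinf, finrank_bot, add_zero] at this
  rw [Matrix.rank, hsup, this]; rfl

private lemma rank_le_one' {n : ℕ} (u v : Fin n → ℂ) (hu : u ≠ 0)
    (A : Matrix (Fin n) (Fin n) ℂ) (hA : ∀ i j, A i j = u i * v j) : A.rank ≤ 1 := by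
  have hle : LinearMap.range A.mulVecLin ≤ Submodule.span ℂ {u} := by
    rintro x ⟨w, rfl⟩
    have : A.mulVecLin w = (∑ j, v j * w j) • u := by
      funext i
      simp only [Matrix.mulVecLin_apply, Matrix.mulVec, dotProduct, Pi.smul_apply,
        smul_eq_mul, Finset.sum_mul]
      exact Finset.sum_congr rfl fun k _ => by rw [hA]; ring
    rw [this]
    exact Submodule.smul_mem _ _ (Submodule.mem_span_singleton_self u)
  calc A.rank ≤ finrank ℂ (Submodule.span ℂ {u}) := Submodule.finrank_mono hle
    _ = 1 := finrank_span_singleton hu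

private lemma strict_nilpotent {n : ℕ} (ρ : Fin n → Fin n → Prop)
    (hrefl : ∀ i, ρ i i) (htrans : ∀ i j k, ρ i j → ρ j k → ρ i k)
    (X : Matrix (Fin n) (Fin n) ℂ)
    (hX : ∀ i j, X i j ≠ 0 → ρ i j ∧ ¬ ρ j i) : X ^ n = 0 := by
  classical
  set h : Fin n → ℕ := fun i => (Finset.univ.filter fun k => ρ k i ∧ ¬ ρ i k).card with hh
  have hmono : ∀ i j, ρ i j → ¬ ρ j i → h i < h j := by
    intro i j hij hji
    apply Finset.card_lt_card
    constructor
    · intro k hk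
      simp only [Finset.mem_filter, Finset.mem_univ, true_and] at hk ⊢
      refine ⟨htrans _ _ _ hk.1 hij, fun hjk => hk.2 (htrans _ _ _ hij hjk)⟩
    · intro hsub
      have : i ∈ Finset.univ.filter fun k => ρ k j ∧ ¬ ρ j k := by
        simp only [Finset.mem_filter, Finset.mem_univ, true_and]; exact ⟨hij, hji⟩
      have := hsub this
      simp only [Finset.mem_filter, Finset.mem_univ, true_and] at this
      exact this.2 (hrefl i)
  have hbound : ∀ j, h j < n := by
    intro j
    have : (Finset.univ.filter fun k => ρ k j ∧ ¬ ρ j k) ⊂ Finset.univ := by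
      rw [Finset.ssubset_univ_iff]
      intro heq
      have : j ∈ Finset.univ.filter fun k => ρ k j ∧ ¬ ρ j k := by
        rw [heq]; exact Finset.mem_univ j
      simp only [Finset.mem_filter, Finset.mem_univ, true_and] at this
      exact this.2 (hrefl j)
    have := Finset.card_lt_card this
    simpa using this
  have hpow : ∀ m i j, (X ^ m) i j ≠ 0 → h i + m ≤ h j := by
    intro m
    induction m with
    | zero =>
      intro i j hne
      rw [pow_zero] at hne
      rcases eq_or_ne i j with rfl | hij
      · omega
      · exact absurd (Matrix.one_apply_ne hij) hne
    | succ m ih =>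
      intro i j hne
      rw [pow_succ, Matrix.mul_apply] at hne
      obtain ⟨k, -, hk⟩ := Finset.exists_ne_zero_of_sum_ne_zero hne
      have h1 : (X ^ m) i k ≠ 0 := fun h0 => hk (by rw [h0, zero_mul])
      have h2 : X k j ≠ 0 := fun h0 => hk (by rw [h0, mul_zero])
      have := ih i k h1
      have := hmono k j (hX k j h2).1 (hX k j h2).2
      omega
  ext i j
  by_contra hne
  have := hpow n i j hne
  have := hbound j
  omega

private lemma key {n : ℕ} (ρ : Fin n → Fin n → Prop)
    (hrefl : ∀ i, ρ i i) (htrans : ∀ i j k, ρ i j → ρ j k → ρ i k)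
    (S : Set (Fin n)) :
    ∀ r (P : Matrix (Fin n) (Fin n) ℂ), (∀ i j, ¬ ρ i j → P i j = 0) → P * P = P →
      (∀ i j, P i j ≠ 0 → i ∈ S ∧ j ∈ S) → P.rank = r →
      ∃ Q : Fin r → Matrix (Fin n) (Fin n) ℂ,
        (∀ k, ∀ i j, ¬ ρ i j → Q k i j = 0) ∧
        (∀ k, Q k * Q k = Q k) ∧
        (∀ k, (Q k).rank = 1) ∧
        (∀ k l, k ≠ l → Q k * Q l = 0) ∧
        (∀ k i j, Q k i j ≠ 0 → i ∈ S ∧ j ∈ S) ∧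
        P = ∑ k, Q k := by
  intro r
  induction r with
  | zero =>
    intro P hPA hP hS hrank
    have hP0 : P = 0 := (myRankZeroIff P).mp hrank
    exact ⟨fun k => k.elim0, fun k => k.elim0, fun k => k.elim0, fun k => k.elim0,
      fun k => k.elim0, fun k => k.elim0, by simp [hP0]⟩
  | succ r ih =>
    intro P hPA hP hS hrank
    have hPne : P ≠ 0 := by
      intro h0; rw [h0] at hrank; simp at hrank
    have hex : ∃ i j, ρ i j ∧ ρ j i ∧ P i j ≠ 0 := by
      by_contra hcon
      push_neg at hcon
      have hstrict : ∀ i j, P i j ≠ 0 → ρ i j ∧ ¬ ρ j i := by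
        intro i j hne
        have h1 : ρ i j := by by_contra h; exact hne (hPA i j h)
        exact ⟨h1, fun h2 => hne (hcon i j h1 h2)⟩
      have hnil := strict_nilpotent ρ hrefl htrans P hstrict
      have hps : ∀ m : ℕ, P ^ (m + 1) = P := by
        intro m; induction m with
        | zero => rw [pow_one]
        | succ m ih2 => rw [pow_succ, ih2, hP]
      have hzero : P = 0 := by
        have h1 := hps n
        rw [pow_succ, hnil, zero_mul] at h1
        exact h1.symm
      exact hPne hzero
    obtain ⟨i, j, hij, hji, hc⟩ := hex
    set E : Matrix (Fin n) (Fin n) ℂ :=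
      Matrix.of fun a b => P a j * P i b * (P i j)⁻¹ with hEdef
    have hEab : ∀ a b, E a b = P a j * P i b * (P i j)⁻¹ := fun a b => rfl
    have hPP : ∀ a b, ∑ k, P a k * P k b = P a b := by
      intro a b
      have h1 : (P * P) a b = P a b := by rw [hP]
      rw [Matrix.mul_apply] at h1
      exact h1
    have hcinv : (P i j)⁻¹ * P i j = 1 := inv_mul_cancel₀ hc
    have hEE : E * E = E := by
      ext a b
      rw [Matrix.mul_apply, hEab]
      have hterm : ∀ k, E a k * E k b
          = (P a j * P i b * (P i j)⁻¹ * (P i j)⁻¹) * (P i k * P k j) := by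
        intro k; rw [hEab, hEab]; ring
      rw [Finset.sum_congr rfl fun k _ => hterm k, ← Finset.mul_sum, hPP i j]
      field_simp
    have hPE : P * E = E := by
      ext a b
      rw [Matrix.mul_apply, hEab]
      have hterm : ∀ k, P a k * E k b = (P i b * (P i j)⁻¹) * (P a k * P k j) := by
        intro k; rw [hEab]; ring
      rw [Finset.sum_congr rfl fun k _ => hterm k, ← Finset.mul_sum, hPP a j]
      ring
    have hEP : E * P = E := by
      ext a b
      rw [Matrix.mul_apply, hEab]
      have hterm : ∀ k, E a k * P k b = (P a j * (P i j)⁻¹) * (P i k * P k b) := by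
        intro k; rw [hEab]; ring
      rw [Finset.sum_congr rfl fun k _ => hterm k, ← Finset.mul_sum, hPP i b]
      ring
    have hEij : E i j = P i j := by
      rw [hEab, mul_assoc, mul_inv_cancel₀ hc, mul_one]
    have hEne : E ≠ 0 := by
      intro h0
      rw [h0] at hEij
      exact hc (by simpa using hEij.symm)
    have hrankE : E.rank = 1 := by
      have hune : (fun a => P a j) ≠ (0 : Fin n → ℂ) := by
        intro h0; exact hc (congrFun h0 i)
      have hle := rank_le_one' (fun a => P a j) (fun b => P i b * (P i j)⁻¹) hune E
        (fun a b => by rw [hEab]; ring)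
      have hge : E.rank ≠ 0 := fun h0 => hEne ((myRankZeroIff E).mp h0)
      omega
    have hEA : ∀ a b, ¬ ρ a b → E a b = 0 := by
      intro a b hnab
      rcases eq_or_ne (P a j) 0 with h0 | h0
      · rw [hEab, h0, zero_mul, zero_mul]
      · have haj : ρ a j := by by_contra hx; exact h0 (hPA a j hx)
        have hPib : P i b = 0 := by
          by_contra hx
          have hib : ρ i b := by by_contra hy; exact hx (hPA i b hy)
          exact hnab (htrans a i b (htrans a j i haj hji) hib)
        rw [hEab, hPib, mul_zero, zero_mul]
    have hES : ∀ a b, E a b ≠ 0 → a ∈ S ∧ b ∈ S := by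
      intro a b hne
      have h1 : P a j ≠ 0 := by
        intro h0; exact hne (by rw [hEab, h0, zero_mul, zero_mul])
      have h2 : P i b ≠ 0 := by
        intro h0; exact hne (by rw [hEab, h0, mul_zero, zero_mul])
      exact ⟨(hS a j h1).1, (hS i b h2).2⟩
    have hP'idem : (P - E) * (P - E) = P - E := by
      rw [sub_mul, mul_sub, mul_sub, hP, hPE, hEP, hEE]
      abel
    have hEP' : E * (P - E) = 0 := by rw [mul_sub, hEP, hEE, sub_self]
    have hP'E : (P - E) * E = 0 := by rw [sub_mul, hPE, hEE, sub_self]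
    have hrankP' : (P - E).rank = r := by
      have h1 := rank_add_orth (P - E) E hP'idem hEE hP'E hEP'
      have h2 : P - E + E = P := by abel
      rw [h2, hrank, hrankE] at h1
      omega
    have hP'A : ∀ a b, ¬ ρ a b → (P - E) a b = 0 := by
      intro a b hnab
      rw [Matrix.sub_apply, hPA a b hnab, hEA a b hnab, sub_zero]
    have hP'S : ∀ a b, (P - E) a b ≠ 0 → a ∈ S ∧ b ∈ S := by
      intro a b hne
      rw [Matrix.sub_apply] at hne
      rcases eq_or_ne (P a b) 0 with h0 | h0
      · apply hES a b
        intro h1; rw [h0, h1, sub_zero] at hne; exact hne rfl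
      · exact hS a b h0
    obtain ⟨Q', hQ'A, hQ'I, hQ'1, hQ'O, hQ'S, hQ'sum⟩ :=
      ih (P - E) hP'A hP'idem hP'S hrankP'
    have hQ'P' : ∀ m, Q' m * (P - E) = Q' m := by
      intro m
      rw [hQ'sum, Finset.mul_sum]
      rw [Finset.sum_eq_single m (fun l _ hl => hQ'O m l (Ne.symm hl))
        (fun h => absurd (Finset.mem_univ m) h)]
      exact hQ'I m
    have hP'Q' : ∀ m, (P - E) * Q' m = Q' m := by
      intro m
      rw [hQ'sum, Finset.sum_mul]
      rw [Finset.sum_eq_single m (fun l _ hl => hQ'O l m hl)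
        (fun h => absurd (Finset.mem_univ m) h)]
      exact hQ'I m
    have hEQ' : ∀ m, E * Q' m = 0 := by
      intro m
      have h1 : E * ((P - E) * Q' m) = 0 := by rw [← mul_assoc, hEP', zero_mul]
      rwa [hP'Q' m] at h1
    have hQ'E : ∀ m, Q' m * E = 0 := by
      intro m
      have h1 : (Q' m * (P - E)) * E = 0 := by rw [mul_assoc, hP'E, mul_zero]
      rwa [hQ'P' m] at h1
    refine ⟨Fin.cons E Q', ?_, ?_, ?_, ?_, ?_, ?_⟩
    · intro k
      refine Fin.cases ?_ ?_ k
      · simpa only [Fin.cons_zero] using hEA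
      · intro m; simpa only [Fin.cons_succ] using hQ'A m
    · intro k
      refine Fin.cases ?_ ?_ k
      · simpa only [Fin.cons_zero] using hEE
      · intro m; simpa only [Fin.cons_succ] using hQ'I m
    · intro k
      refine Fin.cases ?_ ?_ k
      · simpa only [Fin.cons_zero] using hrankE
      · intro m; simpa only [Fin.cons_succ] using hQ'1 m
    · intro k l
      refine Fin.cases ?_ ?_ k
      · refine Fin.cases ?_ ?_ l
        · intro h; exact absurd rfl h
        · intro m _; simp only [Fin.cons_zero, Fin.cons_succ]; exact hEQ' m
      · intro m
        refine Fin.cases ?_ ?_ l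
        · intro _; simp only [Fin.cons_zero, Fin.cons_succ]; exact hQ'E m
        · intro m' hne
          simp only [Fin.cons_succ]
          exact hQ'O m m' (fun h => hne (by rw [h]))
    · intro k
      refine Fin.cases ?_ ?_ k
      · simpa only [Fin.cons_zero] using hES
      · intro m; simpa only [Fin.cons_succ] using hQ'S m
    · rw [Fin.sum_cons, ← hQ'sum]
      abel

private lemma rank_sum_lemma {n r : ℕ} (Q : Fin r → Matrix (Fin n) (Fin n) ℂ)
    (hI : ∀ k, Q k * Q k = Q k) (h1 : ∀ k, (Q k).rank = 1)
    (hO : ∀ k l, k ≠ l → Q k * Q l = 0) :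
    (∑ k, Q k).rank = r := by
  classical
  have main : ∀ s : Finset (Fin r),
      ((∑ k ∈ s, Q k) * (∑ k ∈ s, Q k) = ∑ k ∈ s, Q k) ∧ (∑ k ∈ s, Q k).rank = s.card := by
    intro s
    induction s using Finset.induction_on with
    | empty => constructor <;> simp
    | @insert a s ha ih =>
      rw [Finset.sum_insert ha]
      have hQaB : Q a * (∑ k ∈ s, Q k) = 0 := by
        rw [Finset.mul_sum]
        exact Finset.sum_eq_zero fun k hk => hO a k (fun h => ha (h ▸ hk))
      have hBQa : (∑ k ∈ s, Q k) * Q a = 0 := by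
        rw [Finset.sum_mul]
        exact Finset.sum_eq_zero fun k hk => hO k a (fun h => ha (h ▸ hk))
      constructor
      · rw [add_mul, mul_add, mul_add, hI a, ih.1, hQaB, hBQa]
        abel
      · rw [rank_add_orth (Q a) _ (hI a) ih.1 hQaB hBQa, h1 a,
          Finset.card_insert_of_notMem ha]
        omega
  have h := (main Finset.univ).2
  simpa using h

end Aux

/-- An idempotent `P` in a structural matrix algebra `A_ρ` has rank
`r ∈ {1,…,n}` iff it is a sum of `r` mutually orthogonal rank-one idempotents of
`A_ρ`; moreover if `P` is supported in `S × S` then the rank-one idempotents can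
be chosen supported in `S × S` as well. -/
theorem sma_idempotent_rank_sum_of_rank_one {n : ℕ} (ρ : Fin n → Fin n → Prop)
    (hrefl : ∀ i, ρ i i) (htrans : ∀ i j k, ρ i j → ρ j k → ρ i k)
    (r : ℕ) (hr1 : 1 ≤ r) (hrn : r ≤ n)
    (P : Matrix (Fin n) (Fin n) ℂ)
    (hPA : P ∈ structuralMatrixAlgebra ρ)
    (hP : P * P = P) :
    (P.rank = r ↔ ∃ Q : Fin r → Matrix (Fin n) (Fin n) ℂ,
        (∀ k, Q k ∈ structuralMatrixAlgebra ρ) ∧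
        (∀ k, Q k * Q k = Q k) ∧
        (∀ k, (Q k).rank = 1) ∧
        (∀ k l, k ≠ l → Q k * Q l = 0) ∧
        P = ∑ k, Q k) ∧
    (∀ S : Set (Fin n), (∀ i j, P i j ≠ 0 → i ∈ S ∧ j ∈ S) → P.rank = r →
      ∃ Q : Fin r → Matrix (Fin n) (Fin n) ℂ,
        (∀ k, Q k ∈ structuralMatrixAlgebra ρ) ∧
        (∀ k, Q k * Q k = Q k) ∧
        (∀ k, (Q k).rank = 1) ∧
        (∀ k l, k ≠ l → Q k * Q l = 0) ∧
        (∀ k i j, Q k i j ≠ 0 → i ∈ S ∧ j ∈ S) ∧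
        P = ∑ k, Q k) := by
  constructor
  · constructor
    · intro hrank
      obtain ⟨Q, h1, h2, h3, h4, h5, h6⟩ := key ρ hrefl htrans Set.univ r P hPA hP
        (fun i j _ => ⟨Set.mem_univ i, Set.mem_univ j⟩) hrank
      exact ⟨Q, h1, h2, h3, h4, h6⟩
    · rintro ⟨Q, hQA, hQI, hQ1, hQO, hsum⟩
      rw [hsum]
      exact rank_sum_lemma Q hQI hQ1 hQO
  · intro S hSsupp hrank
    exact key ρ hrefl htrans S r P hPA hP hSsupp hrank
end

section
/- Let ρ be a quasi-order on [n], let ρ^× denote ρ with all diagonal pairs (i,i) removed, and let S ⊆ ρ^× be a nonempty subset such that for each (i,j) ∈ S: (i,k) ∈ S for every k with (i,k) ∈ ρ^×; (l,j) ∈ S for every l with (l,j) ∈ ρ^×; and (j,i) ∈ ρ^× implies (j,i) ∈ S. Then for each (i,j) ∈ S, if C is the central class containing i and j, then ρ^× ∩ (C × C) ⊆ S. -/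
/-- The equivalence relation `≈` associated to a quasi-order `ρ`: the transitive
(and reflexive) closure of the symmetrized relation `i ≈₀ j ⟺ (i,j) ∈ ρ ∨ (j,i) ∈ ρ`.
Its classes are the central classes. -/
def centralRel {n : ℕ} (ρ : Fin n → Fin n → Prop) : Fin n → Fin n → Prop :=
  Relation.ReflTransGen (fun a b => ρ a b ∨ ρ b a)

/-- Let `ρ` be a quasi-order on `[n]`, `ρ^×` its off-diagonal part,
and `S ⊆ ρ^×` a nonempty subset closed under the three listed operations. Then for
each `(i,j) ∈ S`, the set `S` contains all of `ρ^× ∩ (C × C)`, where `C` is the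
central class containing `i` and `j`. -/
theorem sma_saturation_lemma {n : ℕ} (ρ : Fin n → Fin n → Prop)
    (hrefl : ∀ i, ρ i i) (htrans : ∀ i j k, ρ i j → ρ j k → ρ i k)
    (S : Set (Fin n × Fin n)) (hne : S.Nonempty)
    (hsub : ∀ p ∈ S, ρ p.1 p.2 ∧ p.1 ≠ p.2)
    (h1 : ∀ i j, (i, j) ∈ S → ∀ k, ρ i k → i ≠ k → (i, k) ∈ S)
    (h2 : ∀ i j, (i, j) ∈ S → ∀ l, ρ l j → l ≠ j → (l, j) ∈ S)
    (h3 : ∀ i j, (i, j) ∈ S → ρ j i → j ≠ i → (j, i) ∈ S) :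
    ∀ i j, (i, j) ∈ S → ∀ r s, ρ r s → r ≠ s →
      centralRel ρ i r → centralRel ρ i s → (r, s) ∈ S := by
  -- `covered x` : x occurs in some pair of S
  set cov : Fin n → Prop := fun x => (∃ y, (x, y) ∈ S) ∨ (∃ y, (y, x) ∈ S) with hcov
  -- any ρ-edge out of a covered vertex is in S
  have outA : ∀ x z, cov x → ρ x z → x ≠ z → (x, z) ∈ S := by
    intro x z hx hxz hne'
    rcases hx with ⟨y, hy⟩ | ⟨y, hy⟩
    · exact h1 x y hy z hxz hne'
    · by_cases hyz : y = z
      · subst hyz; exact h3 y x hy hxz hne'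
      · have hyx : ρ y x := (hsub _ hy).1
        have hynex : y ≠ x := (hsub _ hy).2
        have : (y, z) ∈ S := h1 y x hy z (htrans _ _ _ hyx hxz) hyz
        exact h2 y z this x hxz hne'
  have inB : ∀ x z, cov x → ρ z x → z ≠ x → (z, x) ∈ S := by
    intro x z hx hzx hne'
    rcases hx with ⟨y, hy⟩ | ⟨y, hy⟩
    · by_cases hzy : z = y
      · subst hzy; exact h3 x z hy hzx hne'
      · have hxy : ρ x y := (hsub _ hy).1
        have : (z, y) ∈ S := h2 x y hy z (htrans _ _ _ hzx hxy) hzy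
        exact h1 z y this x hzx hne'
    · exact h2 y x hy z hzx hne'
  -- coveredness propagates along centralRel
  have prop : ∀ x z, cov x → centralRel ρ x z → cov z := by
    intro x z hx hchain
    induction hchain with
    | refl => exact hx
    | tail _ hstep ih =>
      rename_i b c _
      by_cases hbc : b = c
      · exact hbc ▸ ih
      · rcases hstep with h | h
        · exact Or.inr ⟨b, outA b c ih h hbc⟩
        · exact Or.inl ⟨b, inB b c ih h (Ne.symm hbc)⟩
  intro i j hij r s hrs hne' hir _
  have : cov r := prop i r (Or.inl ⟨j, hij⟩) hir
  exact outA r s this hrs hne'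
end

section
/- Let A_ρ ⊆ M_n(ℂ) be a structural matrix algebra and let φ : A_ρ → M_n(ℂ) be an injective map satisfying φ(X ∘ Y) = φ(X) ∘ φ(Y) for all X, Y ∈ A_ρ, where ∘ is the normalized Jordan product. Then for every idempotent P ∈ A_ρ, the rank of φ(P) equals the rank of P; in particular φ(0) = 0 and φ(I) = I. -/
/-- The normalized Jordan product `X ∘ Y = (1/2)(XY + YX)`. -/
noncomputable def njord {n : ℕ} (X Y : Matrix (Fin n) (Fin n) ℂ) : Matrix (Fin n) (Fin n) ℂ :=
  (1 / 2 : ℂ) • (X * Y + Y * X)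

open Matrix

lemma trace_eq_rank' {n : ℕ} {A : Matrix (Fin n) (Fin n) ℂ} (h : A * A = A) :
    A.trace = (A.rank : ℂ) := by
  have hcomp : A.mulVecLin ∘ₗ A.mulVecLin = A.mulVecLin := by
    rw [← Matrix.mulVecLin_mul, h]
  have hproj : LinearMap.IsProj (LinearMap.range A.mulVecLin) A.mulVecLin := by
    refine ⟨fun x => LinearMap.mem_range_self _ x, ?_⟩
    rintro x ⟨y, rfl⟩
    exact LinearMap.congr_fun hcomp y
  have ht := hproj.trace
  rw [LinearMap.trace_eq_matrix_trace ℂ (Pi.basisFun ℂ (Fin n)),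
    LinearMap.toMatrix_eq_toMatrix', ← Matrix.toLin'_apply', LinearMap.toMatrix'_toLin'] at ht
  rw [ht, Matrix.rank, Matrix.toLin'_apply']

lemma rank_zero_iff' {n : ℕ} {A : Matrix (Fin n) (Fin n) ℂ} : A.rank = 0 ↔ A = 0 := by
  constructor
  · intro h
    have hb : LinearMap.range A.mulVecLin = ⊥ := Submodule.finrank_eq_zero.mp h
    ext i j
    have : A.mulVecLin (Pi.single j 1) ∈ (⊥ : Submodule ℂ (Fin n → ℂ)) := by
      rw [← hb]; exact LinearMap.mem_range_self _ _
    rw [Submodule.mem_bot] at this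
    have := congrFun this i
    simpa [Matrix.mulVecLin_apply, Matrix.mulVec_single_one] using this
  · rintro rfl; exact Matrix.rank_zero

lemma rank_lt' {n : ℕ} {P Q : Matrix (Fin n) (Fin n) ℂ} (hP : P * P = P) (hQ : Q * Q = Q)
    (hPQ : P * Q = P) (hQP : Q * P = P) (hne : P ≠ Q) : P.rank < Q.rank := by
  have hE : (Q - P) * (Q - P) = Q - P := by
    rw [sub_mul, mul_sub, mul_sub, hP, hQ, hPQ, hQP]; abel
  have hEne : Q - P ≠ 0 := sub_ne_zero.mpr (Ne.symm hne)
  have hErk : (Q - P).rank ≠ 0 := fun h => hEne (rank_zero_iff'.mp h)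
  have htr : (Q.rank : ℂ) = (P.rank : ℂ) + ((Q - P).rank : ℂ) := by
    rw [← trace_eq_rank' hP, ← trace_eq_rank' hQ, ← trace_eq_rank' hE, Matrix.trace_sub]
    ring
  have : Q.rank = P.rank + (Q - P).rank := by exact_mod_cast htr
  omega

lemma halfAdd {n : ℕ} (X : Matrix (Fin n) (Fin n) ℂ) : (1 / 2 : ℂ) • (X + X) = X := by
  rw [← two_smul ℂ X, smul_smul]; norm_num

lemma njord_self {n : ℕ} (X : Matrix (Fin n) (Fin n) ℂ) : njord X X = X * X :=
  halfAdd _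

lemma njord_of_le {n : ℕ} {P Q : Matrix (Fin n) (Fin n) ℂ} (h1 : P * Q = P) (h2 : Q * P = P) :
    njord P Q = P := by
  rw [njord, h1, h2]; exact halfAdd _

lemma le_of_njord {n : ℕ} {P Q : Matrix (Fin n) (Fin n) ℂ} (hP : P * P = P) (hQ : Q * Q = Q)
    (h : njord P Q = P) : P * Q = P ∧ Q * P = P := by
  rw [njord] at h
  have h2 : P * Q + Q * P = P + P := by
    calc P * Q + Q * P = (2 : ℂ) • ((1 / 2 : ℂ) • (P * Q + Q * P)) := by
          rw [smul_smul]; norm_num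
    _ = (2 : ℂ) • P := by rw [h]
    _ = P + P := two_smul ℂ P
  have hl : P * Q + P * (Q * P) = P + P := by
    calc P * Q + P * (Q * P) = P * (P * Q + Q * P) := by
          rw [mul_add, ← mul_assoc P P Q, hP]
    _ = P * (P + P) := by rw [h2]
    _ = P + P := by rw [mul_add, hP]
  have hr : P * (Q * P) + Q * P = P + P := by
    calc P * (Q * P) + Q * P = (P * Q + Q * P) * P := by
          rw [add_mul, mul_assoc P Q P, mul_assoc Q P P, hP]
    _ = (P + P) * P := by rw [h2]
    _ = P + P := by rw [add_mul, hP]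
  have hcomm : P * Q = Q * P := by
    have h3 := hl.trans hr.symm
    rw [add_comm (P * (Q * P))] at h3
    exact add_right_cancel h3
  have hfin : (2 : ℂ) • (P * Q) = (2 : ℂ) • P := by
    rw [two_smul, two_smul]
    nth_rewrite 2 [hcomm]
    exact h2
  have hPQ : P * Q = P := smul_right_injective _ (by norm_num : (2:ℂ) ≠ 0) hfin
  exact ⟨hPQ, hcomm ▸ hPQ⟩

lemma down {n : ℕ} (ρ : Fin n → Fin n → Prop)
    (htrans : ∀ i j k, ρ i j → ρ j k → ρ i k) :
    ∀ r (P : Matrix (Fin n) (Fin n) ℂ), P ∈ structuralMatrixAlgebra ρ → P * P = P →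
      P.rank = r →
    ∃ c : ℕ → Matrix (Fin n) (Fin n) ℂ, c 0 = 0 ∧ c r = P ∧
      (∀ k, k ≤ r → c k ∈ structuralMatrixAlgebra ρ ∧ c k * c k = c k ∧ (c k).rank = k) ∧
      (∀ k, k + 1 ≤ r → c k * c (k+1) = c k ∧ c (k+1) * c k = c k) := by
  intro r
  induction r with
  | zero =>
    intro P hmem hid hrk
    refine ⟨fun _ => 0, rfl, (rank_zero_iff'.mp hrk).symm, ?_, ?_⟩
    · intro k hk
      interval_cases k
      exact ⟨fun i j _ => rfl, by simp, Matrix.rank_zero⟩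
    · intro k hk; omega
  | succ r ih =>
    intro P hmem hid hrk
    -- find nonzero diagonal entry
    have htr : P.trace = (r + 1 : ℕ) := by rw [trace_eq_rank' hid, hrk]
    have hex : ∃ k, P k k ≠ 0 := by
      by_contra hc
      push_neg at hc
      have h0 : P.trace = 0 := by simp [Matrix.trace, Matrix.diag, hc]
      rw [h0] at htr
      exact (Nat.cast_ne_zero.mpr (Nat.succ_ne_zero r)) htr.symm
    obtain ⟨k0, hk0⟩ := hex
    set c0 : ℂ := P k0 k0 with hc0
    set E : Matrix (Fin n) (Fin n) ℂ := Matrix.single k0 k0 (1:ℂ) with hE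
    set e : Matrix (Fin n) (Fin n) ℂ := c0⁻¹ • (P * E * P) with he
    have hentry : ∀ i j, (P * E * P) i j = P i k0 * P k0 j := by
      intro i j
      simp [hE, Matrix.mul_apply, Matrix.single, ite_and, Finset.sum_ite_eq,
        Finset.mul_sum, Finset.sum_ite_eq']
    have hemem : e ∈ structuralMatrixAlgebra ρ := by
      intro i j hij
      have h1 : P i k0 * P k0 j = 0 := by
        by_cases h2 : P i k0 = 0
        · rw [h2, zero_mul]
        · by_cases h3 : P k0 j = 0
          · rw [h3, mul_zero]
          · exfalso
            have r1 : ρ i k0 := by by_contra hr; exact h2 (hmem i k0 hr)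
            have r2 : ρ k0 j := by by_contra hr; exact h3 (hmem k0 j hr)
            exact hij (htrans _ _ _ r1 r2)
      simp [he, Matrix.smul_apply, hentry i j, h1]
    have hPe : P * e = e := by
      rw [he, mul_smul_comm]
      congr 1
      rw [← Matrix.mul_assoc, ← Matrix.mul_assoc, hid]
    have heP : e * P = e := by
      rw [he, smul_mul_assoc]
      congr 1
      rw [Matrix.mul_assoc, Matrix.mul_assoc, hid, ← Matrix.mul_assoc]
    have hEPE : E * P * E = c0 • E := by
      ext a b
      simp [hE, Matrix.mul_apply, Matrix.single, ite_and, Finset.sum_ite_eq,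
        Finset.mul_sum, Finset.sum_ite_eq', Matrix.smul_apply, hc0]
      by_cases h1 : k0 = a <;> by_cases h2 : k0 = b <;> simp [h1, h2]
    have hee : e * e = e := by
      rw [he, smul_mul_assoc, mul_smul_comm, smul_smul]
      have hq : P * E * P * (P * E * P) = c0 • (P * E * P) := by
        have h1 : P * E * P * (P * E * P) = P * (E * P * E) * P := by
          simp only [Matrix.mul_assoc]
          rw [← Matrix.mul_assoc P P (E * P), hid]
        rw [h1, hEPE, mul_smul_comm, smul_mul_assoc]
      rw [hq, smul_smul]
      congr 1
      field_simp
    have htre : e.trace = 1 := by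
      rw [he, Matrix.trace_smul]
      have h2 : (P * E * P).trace = c0 := by
        rw [Matrix.trace_mul_cycle, hid]
        simp [hE, Matrix.trace, Matrix.diag, Matrix.mul_apply, Matrix.single,
          ite_and, Finset.sum_ite_eq, Finset.sum_ite_eq', hc0]
      rw [h2, smul_eq_mul]
      field_simp
    -- P' := P - e
    set P' : Matrix (Fin n) (Fin n) ℂ := P - e with hP'
    have hP'id : P' * P' = P' := by
      rw [hP', sub_mul, mul_sub, mul_sub, hid, hPe, heP, hee]
      abel
    have hP'mem : P' ∈ structuralMatrixAlgebra ρ := by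
      intro i j hij
      simp [hP', Matrix.sub_apply, hmem i j hij, hemem i j hij]
    have hP'rk : P'.rank = r := by
      have : (P'.rank : ℂ) = (r : ℕ) := by
        rw [← trace_eq_rank' hP'id, hP', Matrix.trace_sub, htr, htre]
        push_cast
        ring
      exact_mod_cast this
    obtain ⟨c, hc_0, hc_r, hc_props, hc_consec⟩ := ih P' hP'mem hP'id hP'rk
    refine ⟨fun k => if k ≤ r then c k else P, by simp [hc_0], by simp, ?_, ?_⟩
    · intro k hk
      by_cases hkr : k ≤ r
      · simpa [hkr] using hc_props k hkr
      · have : k = r + 1 := by omega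
        simp only [if_neg hkr]
        exact ⟨hmem, hid, by rw [hrk, this]⟩
    · intro k hk
      by_cases hkr : k + 1 ≤ r
      · simpa [hkr, Nat.le_of_succ_le hkr] using hc_consec k hkr
      · have hkeq : k = r := by omega
        subst hkeq
        have h1 : ¬ (k + 1 ≤ k) := by omega
        simp only [le_refl, if_pos, if_neg h1, hc_r]
        constructor
        · rw [hP', sub_mul, hid, heP]
        · rw [hP', mul_sub, hid, hPe]

lemma chain_le {n : ℕ} (c : ℕ → Matrix (Fin n) (Fin n) ℂ) (N : ℕ)
    (hid : ∀ k, k ≤ N → c k * c k = c k)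
    (hcons : ∀ k, k + 1 ≤ N → c k * c (k+1) = c k ∧ c (k+1) * c k = c k) :
    ∀ d j, j + d ≤ N → c j * c (j+d) = c j ∧ c (j+d) * c j = c j := by
  intro d
  induction d with
  | zero =>
    intro j hj
    simp only [Nat.add_zero]
    exact ⟨hid j (by omega), hid j (by omega)⟩
  | succ d ihd =>
    intro j hj
    have h1 := ihd j (by omega)
    have h2 := hcons (j + d) (by omega)
    constructor
    · calc c j * c (j + (d+1)) = c j * c (j+d) * c (j+d+1) := by
            rw [h1.1]; ring_nf
      _ = c j * (c (j+d) * c (j+d+1)) := by rw [Matrix.mul_assoc]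
      _ = c j := by rw [h2.1, h1.1]
    · calc c (j + (d+1)) * c j = c (j+d+1) * (c (j+d) * c j) := by rw [h1.2]; ring_nf
      _ = c (j+d+1) * c (j+d) * c j := by rw [Matrix.mul_assoc]
      _ = c j := by rw [h2.2, h1.2]

lemma main_rank {n : ℕ} (ρ : Fin n → Fin n → Prop)
    (hrefl : ∀ i, ρ i i) (htrans : ∀ i j k, ρ i j → ρ j k → ρ i k)
    (φ : Matrix (Fin n) (Fin n) ℂ → Matrix (Fin n) (Fin n) ℂ)
    (hinj : Set.InjOn φ (structuralMatrixAlgebra ρ))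
    (hjord : ∀ X ∈ structuralMatrixAlgebra ρ, ∀ Y ∈ structuralMatrixAlgebra ρ,
      φ (njord X Y) = njord (φ X) (φ Y)) :
    ∀ P ∈ structuralMatrixAlgebra ρ, P * P = P → (φ P).rank = P.rank := by
  intro P hPmem hPid
  have hone : (1 : Matrix (Fin n) (Fin n) ℂ) ∈ structuralMatrixAlgebra ρ := by
    intro i j hij
    have hne : i ≠ j := fun h => hij (h ▸ hrefl i)
    exact Matrix.one_apply_ne hne
  obtain ⟨r, hr⟩ : ∃ r, P.rank = r := ⟨_, rfl⟩
  have hrn : r ≤ n := hr ▸ Matrix.rank_le_width P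
  set Q : Matrix (Fin n) (Fin n) ℂ := 1 - P with hQ
  have hQmem : Q ∈ structuralMatrixAlgebra ρ := by
    intro i j hij
    simp [hQ, Matrix.sub_apply, hone i j hij, hPmem i j hij]
  have hQid : Q * Q = Q := by
    rw [hQ, sub_mul, mul_sub, mul_sub, hPid]
    simp
  have htrP : P.trace = (r : ℂ) := by rw [trace_eq_rank' hPid, hr]
  have hQrk : Q.rank = n - r := by
    have h1 : (Q.rank : ℂ) = ((n - r : ℕ) : ℂ) := by
      rw [← trace_eq_rank' hQid, hQ, Matrix.trace_sub, htrP, Matrix.trace_one,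
        Nat.cast_sub hrn]
      simp
    exact_mod_cast h1
  obtain ⟨c, hc0, hcr, hcp, hcc⟩ := down ρ htrans r P hPmem hPid hr
  obtain ⟨d, hd0, hdr, hdp, hdc⟩ := down ρ htrans (n - r) Q hQmem hQid hQrk
  set R : ℕ → Matrix (Fin n) (Fin n) ℂ := fun k => if k ≤ r then c k else 1 - d (n - k)
    with hRdef
  have hRr : R r = P := by simp [hRdef, hcr]
  have hRprops : ∀ k, k ≤ n → R k ∈ structuralMatrixAlgebra ρ ∧ R k * R k = R k ∧
      (R k).rank = k := by
    intro k hk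
    by_cases hkr : k ≤ r
    · simpa [hRdef, hkr] using hcp k hkr
    · have hm : n - k ≤ n - r := by omega
      obtain ⟨hm1, hm2, hm3⟩ := hdp (n - k) hm
      have hRk : R k = 1 - d (n - k) := by simp [hRdef, hkr]
      refine ⟨?_, ?_, ?_⟩
      · rw [hRk]; intro i j hij
        simp [Matrix.sub_apply, hone i j hij, hm1 i j hij]
      · rw [hRk, sub_mul, mul_sub, mul_sub, hm2]; simp
      · have hid2 : R k * R k = R k := by rw [hRk, sub_mul, mul_sub, mul_sub, hm2]; simp
        have h1 : ((R k).rank : ℂ) = (k : ℕ) := by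
          rw [← trace_eq_rank' hid2, hRk, Matrix.trace_sub, Matrix.trace_one,
            trace_eq_rank' hm2, hm3, Fintype.card_fin,
            Nat.cast_sub hk]
          ring
        exact_mod_cast h1
  have expand : ∀ X Y : Matrix (Fin n) (Fin n) ℂ,
      (1 - X) * (1 - Y) = 1 - X - Y + X * Y := by
    intro X Y; noncomm_ring
  have hRcons : ∀ k, k + 1 ≤ n → R k * R (k+1) = R k ∧ R (k+1) * R k = R k := by
    intro k hk
    by_cases h1 : k + 1 ≤ r
    · have h2 : k ≤ r := by omega
      simpa [hRdef, h1, h2] using hcc k h1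
    · by_cases h2 : k ≤ r
      · have hkr : r = k := by omega
        subst hkr
        have hRk1 : R (r+1) = 1 - d (n - (r+1)) := by simp [hRdef, h1]
        have hm1 : (n - (r+1)) + 1 = n - r := by omega
        have hcons := hdc (n - (r+1)) (by omega)
        rw [hm1] at hcons
        have hdnk : d (n - r) = Q := hdr
        rw [hdnk] at hcons
        have hPd : P * d (n - (r+1)) = 0 := by
          have h3 := hcons.2
          rw [hQ, sub_mul, one_mul] at h3
          exact sub_eq_self.mp h3
        have hdP : d (n - (r+1)) * P = 0 := by
          have h3 := hcons.1
          rw [hQ, mul_sub, mul_one] at h3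
          exact sub_eq_self.mp h3
        constructor
        · rw [hRr, hRk1, mul_sub, mul_one, hPd, sub_zero]
        · rw [hRr, hRk1, sub_mul, one_mul, hdP, sub_zero]
      · have hRk : R k = 1 - d (n - k) := by simp [hRdef, h2]
        have hRk1 : R (k+1) = 1 - d (n - (k+1)) := by simp [hRdef, h1]
        have hm1 : (n - (k+1)) + 1 = n - k := by omega
        have hcons := hdc (n - (k+1)) (by omega)
        rw [hm1] at hcons
        constructor
        · rw [hRk, hRk1, expand, hcons.2]
          abel
        · rw [hRk1, hRk, expand, hcons.1]
          abel
  have hRle : ∀ j k, j ≤ k → k ≤ n → R j * R k = R j ∧ R k * R j = R j := by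
    intro j k hjk hkn
    have h := chain_le R n (fun k hk => (hRprops k hk).2.1) hRcons (k - j) j (by omega)
    rw [Nat.add_sub_cancel' hjk] at h
    exact h
  have hφidem : ∀ k, k ≤ n → φ (R k) * φ (R k) = φ (R k) := by
    intro k hk
    obtain ⟨hmem, hid, -⟩ := hRprops k hk
    have h1 : njord (R k) (R k) = R k := njord_of_le hid hid
    have h2 := hjord (R k) hmem (R k) hmem
    rw [h1, njord_self] at h2
    exact h2.symm
  have hφle : ∀ j k, j ≤ k → k ≤ n →
      φ (R j) * φ (R k) = φ (R j) ∧ φ (R k) * φ (R j) = φ (R j) := by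
    intro j k hjk hkn
    obtain ⟨hl1, hl2⟩ := hRle j k hjk hkn
    have h1 : njord (R j) (R k) = R j := njord_of_le hl1 hl2
    have h2 := hjord (R j) (hRprops j (by omega)).1 (R k) (hRprops k hkn).1
    rw [h1] at h2
    exact le_of_njord (hφidem j (by omega)) (hφidem k hkn) h2.symm
  have hφlt : ∀ j k, j < k → k ≤ n → (φ (R j)).rank < (φ (R k)).rank := by
    intro j k hjk hkn
    have hne : φ (R j) ≠ φ (R k) := by
      intro hc
      have heq := hinj (hRprops j (by omega)).1 (hRprops k hkn).1 hc
      have hj := (hRprops j (by omega)).2.2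
      have hk' := (hRprops k hkn).2.2
      rw [heq] at hj
      omega
    obtain ⟨ha, hb⟩ := hφle j k (le_of_lt hjk) hkn
    exact rank_lt' (hφidem j (by omega)) (hφidem k hkn) ha hb hne
  have hcount : ∀ e k, k + e ≤ n → (φ (R k)).rank + e ≤ (φ (R (k + e))).rank := by
    intro e
    induction e with
    | zero => intro k hk; simp
    | succ e ihe =>
      intro k hk
      have h1 := ihe k (by omega)
      have h2 := hφlt (k + e) (k + e + 1) (by omega) (by omega)
      have h3 : k + (e + 1) = (k + e) + 1 := by omega
      rw [h3]
      omega
  have hfk : ∀ k, k ≤ n → (φ (R k)).rank = k := by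
    intro k hk
    have h1 := hcount k 0 (by omega)
    have h2 := hcount (n - k) k (by omega)
    rw [show (0 + k) = k from by omega] at h1
    rw [show (k + (n - k)) = n from by omega] at h2
    have hfn : (φ (R n)).rank ≤ n := Matrix.rank_le_width _
    omega
  have hfin := hfk r hrn
  rw [hRr] at hfin
  rw [hfin, hr]

/-- An injective map on a structural matrix algebra preserving the
normalized Jordan product preserves the rank of idempotents; in particular
`φ(0) = 0` and `φ(I) = I`. -/
theorem jordan_mult_map_preserves_rank {n : ℕ} (ρ : Fin n → Fin n → Prop)
    (hrefl : ∀ i, ρ i i) (htrans : ∀ i j k, ρ i j → ρ j k → ρ i k)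
    (φ : Matrix (Fin n) (Fin n) ℂ → Matrix (Fin n) (Fin n) ℂ)
    (hinj : Set.InjOn φ (structuralMatrixAlgebra ρ))
    (hjord : ∀ X ∈ structuralMatrixAlgebra ρ, ∀ Y ∈ structuralMatrixAlgebra ρ,
      φ (njord X Y) = njord (φ X) (φ Y)) :
    (∀ P ∈ structuralMatrixAlgebra ρ, P * P = P → (φ P).rank = P.rank) ∧
    φ 0 = 0 ∧ φ 1 = 1 := by
  have hmain := main_rank ρ hrefl htrans φ hinj hjord
  have h0mem : (0 : Matrix (Fin n) (Fin n) ℂ) ∈ structuralMatrixAlgebra ρ :=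
    fun i j _ => rfl
  have honemem : (1 : Matrix (Fin n) (Fin n) ℂ) ∈ structuralMatrixAlgebra ρ := by
    intro i j hij
    have hne : i ≠ j := fun h => hij (h ▸ hrefl i)
    exact Matrix.one_apply_ne hne
  have h0 : φ 0 = 0 := by
    have h := hmain 0 h0mem (by simp)
    rw [Matrix.rank_zero] at h
    exact rank_zero_iff'.mp h
  refine ⟨hmain, h0, ?_⟩
  have h2 := hjord 1 honemem 1 honemem
  rw [njord_self, njord_self, mul_one] at h2
  have h1idem : φ 1 * φ 1 = φ 1 := h2.symm
  have hrk : (φ 1).rank = n := by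
    rw [hmain 1 honemem (by simp), Matrix.rank_one, Fintype.card_fin]
  have h3 : (1 - φ 1) * (1 - φ 1) = 1 - φ 1 := by
    have e : (1 - φ 1) * (1 - φ 1) = 1 - φ 1 - φ 1 + φ 1 * φ 1 := by noncomm_ring
    rw [e, h1idem]
    abel
  have h4 : ((1 - φ 1).rank : ℂ) = 0 := by
    rw [← trace_eq_rank' h3, Matrix.trace_sub, Matrix.trace_one, Fintype.card_fin,
      trace_eq_rank' h1idem, hrk]
    ring
  have h5 : (1 - φ 1).rank = 0 := by exact_mod_cast h4
  have h6 := rank_zero_iff'.mp h5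
  rw [sub_eq_zero] at h6
  exact h6.symm
end

section
/- Let A_ρ ⊆ M_n(ℂ) be a structural matrix algebra and let φ : A_ρ → M_n(ℂ) be an injective map satisfying φ(X ∘ Y) = φ(X) ∘ φ(Y) for all X, Y ∈ A_ρ, where ∘ is the normalized Jordan product. Then for every idempotent P ∈ A_ρ we have φ(I − P) = I − φ(P). -/
/-!
A Jordan multiplicative map sends idempotents to idempotents, and since `2` is invertible the
relations `XY = YX = 0` and `XY = YX = Y` between an idempotent `X` and an element `Y` can be read
off the Jordan product alone, so they pass to the images. Traces of idempotent matrices are their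
ranks, hence `n` nonzero orthogonal idempotents in `Mₙ(ℂ)` sum to `1`. Applied to the images of
the diagonal matrix units, this forces `φ 0 = 0`. An idempotent `P` of `A_ρ` splits inside `A_ρ`
into `rank P` orthogonal rank-one idempotents `(P i i)⁻¹ P Eᵢᵢ P`, and so does `1 - P`; the images
of these `n` pieces are `n` nonzero orthogonal idempotents, so they sum to `1`. As `φ P` fixes the
images of the pieces of `P` and annihilates those of `1 - P`, it is the partial sum over the former,
and `φ (1 - P)` is the complementary one.
-/

section Idempotent

variable {R : Type*} [Ring R] [IsAddTorsionFree R] {e x : R}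

theorem IsIdempotentElem.mul_eq_left_of_mul_add_mul_eq (he : IsIdempotentElem e)
    (h : e * x + x * e = 2 • e) : e * x = e ∧ x * e = e := by
  have hanti : e * (x - 1) + (x - 1) * e = 0 := by
    rw [mul_sub, sub_mul, mul_one, one_mul, sub_add_sub_comm, h, two_nsmul, sub_self]
  have hl : e * (x - 1) = 0 := he.mul_eq_zero_of_anticommute hanti
  have hr : (x - 1) * e = 0 := (he.commute_of_anticommute hanti).eq ▸ hl
  rw [mul_sub, mul_one, sub_eq_zero] at hl
  rw [sub_mul, one_mul, sub_eq_zero] at hr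
  exact ⟨hl, hr⟩

theorem IsIdempotentElem.mul_eq_right_of_mul_add_mul_eq (he : IsIdempotentElem e)
    (h : e * x + x * e = 2 • x) : e * x = x ∧ x * e = x := by
  have hanti : (1 - e) * x + x * (1 - e) = 0 := by
    rw [mul_sub, sub_mul, mul_one, one_mul, sub_add_sub_comm, h, two_nsmul, sub_self]
  have hl : (1 - e) * x = 0 := he.one_sub.mul_eq_zero_of_anticommute hanti
  have hr : x * (1 - e) = 0 := (he.one_sub.commute_of_anticommute hanti).eq ▸ hl
  rw [sub_mul, one_mul, sub_eq_zero] at hl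
  rw [mul_sub, mul_one, sub_eq_zero] at hr
  exact ⟨hl.symm, hr.symm⟩

end Idempotent

namespace OrthogonalIdempotents

variable {R ι κ : Type*} [Semiring R] {e : ι → R}

theorem sum_mul_of_mem (he : OrthogonalIdempotents e) {i : ι} {s : Finset ι} (h : i ∈ s) :
    (∑ j ∈ s, e j) * e i = e i := by
  classical
  simp [Finset.sum_mul, he.mul_eq, h]

theorem sum_mul_of_notMem (he : OrthogonalIdempotents e) {i : ι} {s : Finset ι} (h : i ∉ s) :
    (∑ j ∈ s, e j) * e i = 0 := by
  classical
  simp [Finset.sum_mul, he.mul_eq, h]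

theorem sumElim [Fintype ι] [Fintype κ] {f : κ → R} (he : OrthogonalIdempotents e)
    (hf : OrthogonalIdempotents f) (hef : (∑ i, e i) * ∑ j, f j = 0)
    (hfe : (∑ j, f j) * ∑ i, e i = 0) : OrthogonalIdempotents (Sum.elim e f) where
  idem := Sum.rec he.idem hf.idem
  ortho := by
    rintro (i | j) (i' | j') hne
    · exact he.ortho fun h => hne (congrArg Sum.inl h)
    · calc e i * f j' = e i * (∑ i, e i) * ((∑ j, f j) * f j') := by
            rw [he.mul_sum_of_mem (Finset.mem_univ i), hf.sum_mul_of_mem (Finset.mem_univ j')]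
        _ = 0 := by rw [mul_assoc, ← mul_assoc (∑ i, e i), hef, zero_mul, mul_zero]
    · calc f j * e i' = f j * (∑ j, f j) * ((∑ i, e i) * e i') := by
            rw [hf.mul_sum_of_mem (Finset.mem_univ j), he.sum_mul_of_mem (Finset.mem_univ i')]
        _ = 0 := by rw [mul_assoc, ← mul_assoc (∑ j, f j), hfe, zero_mul, mul_zero]
    · exact hf.ortho fun h => hne (congrArg Sum.inr h)

end OrthogonalIdempotents

namespace Matrix

variable {m K : Type*} [Fintype m] [DecidableEq m] [Field K] {P : Matrix m m K}

theorem orthogonalIdempotents_single_one {R : Type*} [Semiring R] :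
    OrthogonalIdempotents fun i : m => single i i (1 : R) where
  idem i := by rw [IsIdempotentElem, single_mul_single_same, one_mul]
  ortho i j hij := single_mul_single_of_ne (c := 1) i i j hij 1

theorem isIdempotentElem_toLin' (hP : IsIdempotentElem P) : IsIdempotentElem (toLin' P) :=
  hP.map toLinAlgEquiv'

theorem trace_eq_rank_of_isIdempotentElem (hP : IsIdempotentElem P) : P.trace = P.rank := by
  rw [← trace_toLin'_eq,
    (LinearMap.IsIdempotentElem.isProj_range _ (isIdempotentElem_toLin' hP)).trace]
  rfl

variable [CharZero K]

theorem rank_eq_zero_iff_of_isIdempotentElem (hP : IsIdempotentElem P) : P.rank = 0 ↔ P = 0 := by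
  rw [← Nat.cast_eq_zero (R := K), ← trace_eq_rank_of_isIdempotentElem hP, ← trace_toLin'_eq,
    LinearMap.IsIdempotentElem.trace_eq_zero_iff (isIdempotentElem_toLin' hP)]
  exact toLin'.map_eq_zero_iff

theorem rank_add_rank_one_sub_of_isIdempotentElem (hP : IsIdempotentElem P) :
    P.rank + (1 - P).rank = Fintype.card m := by
  have h := congrArg trace (add_sub_cancel P (1 : Matrix m m K))
  rw [trace_add, trace_one, trace_eq_rank_of_isIdempotentElem hP,
    trace_eq_rank_of_isIdempotentElem hP.one_sub] at h
  exact_mod_cast h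

end Matrix

namespace OrthogonalIdempotents

open Matrix

variable {m K ι : Type*} [Fintype m] [DecidableEq m] [Field K] [CharZero K] [Fintype ι]
  {F : ι → Matrix m m K}

theorem rank_sum (hF : OrthogonalIdempotents F) : (∑ i, F i).rank = ∑ i, (F i).rank := by
  have h := trace_eq_rank_of_isIdempotentElem (hF.isIdempotentElem_sum (s := Finset.univ))
  rw [trace_sum,
    Finset.sum_congr rfl fun i _ => trace_eq_rank_of_isIdempotentElem (hF.idem i)] at h
  exact_mod_cast h.symm

theorem completeOrthogonalIdempotents_of_card_le (hF : OrthogonalIdempotents F)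
    (hF0 : ∀ i, F i ≠ 0) (hcard : Fintype.card m ≤ Fintype.card ι) :
    CompleteOrthogonalIdempotents F := by
  refine ⟨hF, ?_⟩
  have hS : IsIdempotentElem (∑ i, F i) := hF.isIdempotentElem_sum
  have hrank : (∑ i, F i).rank = Fintype.card m := by
    refine le_antisymm (rank_le_card_height _) (hcard.trans ?_)
    rw [hF.rank_sum, Fintype.card_eq_sum_ones]
    exact Finset.sum_le_sum fun i _ => Nat.one_le_iff_ne_zero.mpr
      fun h => hF0 i ((rank_eq_zero_iff_of_isIdempotentElem (hF.idem i)).mp h)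
  have h := rank_add_rank_one_sub_of_isIdempotentElem hS
  rw [hrank, Nat.add_eq_left, rank_eq_zero_iff_of_isIdempotentElem hS.one_sub, sub_eq_zero] at h
  exact h.symm

end OrthogonalIdempotents

section DiagonalMatrixUnits

open Matrix

variable {m K : Type*} [Fintype m] [DecidableEq m] [Field K] [CharZero K]
  {A : Subalgebra K (Matrix m m K)} {P : Matrix m m K}

theorem exists_isIdempotentElem_trace_eq_one_le (hA : ∀ i, single i i (1 : K) ∈ A) (hP : P ∈ A)
    (hPe : IsIdempotentElem P) (hP0 : P ≠ 0) :
    ∃ Q ∈ A, IsIdempotentElem Q ∧ Q.trace = 1 ∧ Q * P = Q ∧ P * Q = Q := by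
  have htrace : P.trace ≠ 0 := by
    rw [trace_eq_rank_of_isIdempotentElem hPe, Nat.cast_ne_zero]
    exact (rank_eq_zero_iff_of_isIdempotentElem hPe).not.mpr hP0
  obtain ⟨i, -, hi⟩ : ∃ i ∈ Finset.univ, P i i ≠ 0 := Finset.exists_ne_zero_of_sum_ne_zero htrace
  set E := single i i (1 : K)
  have hEPE : E * P * E = P i i • E := by
    rw [single_mul_mul_single, one_mul, mul_one, smul_single, smul_eq_mul, mul_one]
  have hsq : P * E * P * (P * E * P) = P i i • (P * E * P) := by
    calc P * E * P * (P * E * P) = P * (E * (P * P) * E) * P := by noncomm_ring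
      _ = P i i • (P * E * P) := by rw [hPe.eq, hEPE, mul_smul_comm, smul_mul_assoc]
  refine ⟨(P i i)⁻¹ • (P * E * P), A.smul_mem (A.mul_mem (A.mul_mem hP (hA i)) hP) _,
    ?_, ?_, ?_, ?_⟩
  · rw [IsIdempotentElem, smul_mul_smul_comm, hsq, smul_smul, mul_assoc, inv_mul_cancel₀ hi,
      mul_one]
  · rw [trace_smul, trace_mul_cycle, hPe.eq, trace_mul_single, smul_eq_mul, MulOpposite.op_one,
      one_smul, inv_mul_cancel₀ hi]
  · rw [smul_mul_assoc, mul_assoc, hPe.eq]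
  · rw [mul_smul_comm, ← mul_assoc, ← mul_assoc, hPe.eq]

theorem exists_orthogonalIdempotents_sum_eq (hA : ∀ i, single i i (1 : K) ∈ A) (hP : P ∈ A)
    (hPe : IsIdempotentElem P) :
    ∃ g : Fin P.rank → Matrix m m K, OrthogonalIdempotents g ∧ (∀ i, g i ∈ A) ∧
      (∀ i, g i ≠ 0) ∧ ∑ i, g i = P := by
  generalize hk : P.rank = k
  induction k generalizing P with
  | zero =>
    refine ⟨finZeroElim, ⟨finZeroElim, fun i => i.elim0⟩, finZeroElim, finZeroElim, ?_⟩
    rw [Finset.univ_eq_empty, Finset.sum_empty, eq_comm,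
      ← rank_eq_zero_iff_of_isIdempotentElem hPe, hk]
  | succ k ih =>
    have hP0 : P ≠ 0 := fun h0 =>
      k.succ_ne_zero (hk.symm.trans ((rank_eq_zero_iff_of_isIdempotentElem hPe).mpr h0))
    obtain ⟨Q, hQA, hQe, hQtr, hQP, hPQ⟩ := exists_isIdempotentElem_trace_eq_one_le hA hP hPe hP0
    have hP'e : IsIdempotentElem (P - Q) := hQe.sub hPe hQP hPQ
    have hP'k : (P - Q).rank = k := by
      have h := trace_eq_rank_of_isIdempotentElem hP'e
      rw [trace_sub, trace_eq_rank_of_isIdempotentElem hPe, hQtr, hk, Nat.cast_succ,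
        add_sub_cancel_right] at h
      exact_mod_cast h.symm
    obtain ⟨g, hg, hgA, hg0, hgP⟩ := ih (A.sub_mem hP hQA) hP'e hP'k
    have hQg : Q * ∑ i, g i = 0 := by rw [hgP, mul_sub, hQP, hQe.eq, sub_self]
    have hgQ : (∑ i, g i) * Q = 0 := by rw [hgP, sub_mul, hPQ, hQe.eq, sub_self]
    have hQ0 : Q ≠ 0 := fun h => one_ne_zero (hQtr ▸ h ▸ trace_zero m K)
    have hmem : ∀ o, Option.elim o Q g ∈ A := by rintro (_ | j); exacts [hQA, hgA j]
    have hne : ∀ o, Option.elim o Q g ≠ 0 := by rintro (_ | j); exacts [hQ0, hg0 j]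
    refine ⟨fun i => Option.elim (finSuccEquiv k i) Q g,
      (OrthogonalIdempotents.equiv (finSuccEquiv k)).mpr (hg.option Q hQe hQg hgQ),
      fun i => hmem _, fun i => hne _, ?_⟩
    rw [(finSuccEquiv k).sum_comp (fun o => Option.elim o Q g), Fintype.sum_option]
    simp only [Option.elim_none, Option.elim_some]
    rw [hgP, add_sub_cancel]

end DiagonalMatrixUnits

instance (m : Type*) : IsAddTorsionFree (Matrix m m ℂ) := .of_module_rat _

theorem njord_eq_iff {n : ℕ} {X Y W : Matrix (Fin n) (Fin n) ℂ} :
    njord X Y = W ↔ X * Y + Y * X = 2 • W := by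
  rw [njord, one_div, inv_smul_eq_iff₀ two_ne_zero, ofNat_smul_eq_nsmul]

def IsJordanMultiplicativeOn {n : ℕ} (φ : Matrix (Fin n) (Fin n) ℂ → Matrix (Fin n) (Fin n) ℂ)
    (S : Set (Matrix (Fin n) (Fin n) ℂ)) : Prop :=
  ∀ X ∈ S, ∀ Y ∈ S, φ (njord X Y) = njord (φ X) (φ Y)

namespace IsJordanMultiplicativeOn

open Matrix

variable {n : ℕ} {φ : Matrix (Fin n) (Fin n) ℂ → Matrix (Fin n) (Fin n) ℂ}
  {A : Subalgebra ℂ (Matrix (Fin n) (Fin n) ℂ)} {X Y W : Matrix (Fin n) (Fin n) ℂ}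

theorem mul_add_mul_eq (hφ : IsJordanMultiplicativeOn φ A) (hX : X ∈ A) (hY : Y ∈ A)
    (h : X * Y + Y * X = 2 • W) : φ X * φ Y + φ Y * φ X = 2 • φ W := by
  rw [← njord_eq_iff] at h ⊢
  rw [← hφ X hX Y hY, h]

theorem isIdempotentElem_map (hφ : IsJordanMultiplicativeOn φ A) (hX : X ∈ A)
    (hXe : IsIdempotentElem X) : IsIdempotentElem (φ X) := by
  have h := hφ.mul_add_mul_eq hX hX (by rw [hXe.eq, two_nsmul])
  rw [← two_nsmul] at h
  exact nsmul_right_injective two_ne_zero h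

theorem map_zero_mul_map (hφ : IsJordanMultiplicativeOn φ A) (hX : X ∈ A) :
    φ 0 * φ X = φ 0 ∧ φ X * φ 0 = φ 0 :=
  (hφ.isIdempotentElem_map A.zero_mem .zero).mul_eq_left_of_mul_add_mul_eq
    (hφ.mul_add_mul_eq A.zero_mem hX (by rw [zero_mul, mul_zero, add_zero, smul_zero]))

theorem orthogonalIdempotents_map_sub_map_zero (hφ : IsJordanMultiplicativeOn φ A) {ι : Type*}
    {g : ι → Matrix (Fin n) (Fin n) ℂ} (hg : OrthogonalIdempotents g) (hgA : ∀ i, g i ∈ A) :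
    OrthogonalIdempotents fun i => φ (g i) - φ 0 := by
  have hz := fun i => hφ.map_zero_mul_map (hgA i)
  have hidem : ∀ i, IsIdempotentElem (φ (g i) - φ 0) := fun i =>
    (hφ.isIdempotentElem_map A.zero_mem .zero).sub (hφ.isIdempotentElem_map (hgA i) (hg.idem i))
      (hz i).1 (hz i).2
  refine ⟨hidem, fun i j hij => (hidem i).mul_eq_zero_of_anticommute ?_⟩
  have h := hφ.mul_add_mul_eq (W := 0) (hgA i) (hgA j)
    (by rw [hg.ortho hij, hg.ortho hij.symm, add_zero, smul_zero])
  have hzz : φ 0 * φ 0 = φ 0 := (hφ.isIdempotentElem_map A.zero_mem .zero).eq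
  simp only [mul_sub, sub_mul, (hz i).1, (hz i).2, (hz j).1, (hz j).2, hzz]
  calc _ = (φ (g i) * φ (g j) + φ (g j) * φ (g i)) - 2 • φ 0 := by abel
    _ = 0 := by rw [h, sub_self]

theorem map_zero_eq_zero (hφ : IsJordanMultiplicativeOn φ A) (hinj : Set.InjOn φ A)
    (hA : ∀ i, single i i (1 : ℂ) ∈ A) : φ 0 = 0 := by
  set f := fun i => φ (single i i (1 : ℂ)) - φ 0
  have hf : CompleteOrthogonalIdempotents f := by
    refine (hφ.orthogonalIdempotents_map_sub_map_zero orthogonalIdempotents_single_one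
      hA).completeOrthogonalIdempotents_of_card_le (fun i => ?_) le_rfl
    refine sub_ne_zero.mpr (hinj.ne (hA i) A.zero_mem ?_)
    exact fun h => one_ne_zero (congrFun (congrFun h i) i ▸ (single_apply_same i i 1).symm)
  calc φ 0 = φ 0 * ∑ i, f i := by rw [hf.complete, mul_one]
    _ = 0 := by
      rw [Finset.mul_sum]
      exact Finset.sum_eq_zero fun i _ => by
        rw [mul_sub, (hφ.map_zero_mul_map (hA i)).1,
          (hφ.isIdempotentElem_map A.zero_mem .zero).eq, sub_self]

theorem map_sum (hφ : IsJordanMultiplicativeOn φ A) (hφ0 : φ 0 = 0) {ι : Type*} [Fintype ι]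
    {F : ι → Matrix (Fin n) (Fin n) ℂ} (hF : OrthogonalIdempotents F) (hFA : ∀ i, F i ∈ A)
    (hφF : CompleteOrthogonalIdempotents (φ ∘ F)) (s : Finset ι) :
    φ (∑ i ∈ s, F i) = ∑ i ∈ s, φ (F i) := by
  classical
  have hX : ∑ i ∈ s, F i ∈ A := A.sum_mem fun i _ => hFA i
  have hφX := hφ.isIdempotentElem_map hX hF.isIdempotentElem_sum
  have hmul : ∀ i, φ (∑ i ∈ s, F i) * φ (F i) = if i ∈ s then φ (F i) else 0 := by
    intro i
    split_ifs with hi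
    · exact (hφX.mul_eq_right_of_mul_add_mul_eq (hφ.mul_add_mul_eq hX (hFA i)
        (by rw [hF.sum_mul_of_mem hi, hF.mul_sum_of_mem hi, two_nsmul]))).1
    · refine hφX.mul_eq_zero_of_anticommute ?_
      have h := hφ.mul_add_mul_eq (W := 0) hX (hFA i)
        (by rw [hF.sum_mul_of_notMem hi, hF.mul_sum_of_notMem hi, add_zero, smul_zero])
      rwa [hφ0, smul_zero] at h
  calc φ (∑ i ∈ s, F i) = φ (∑ i ∈ s, F i) * ∑ i, φ (F i) := by
        rw [← Function.comp_def φ, hφF.complete, mul_one]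
    _ = ∑ i ∈ s, φ (F i) := by rw [Finset.mul_sum, Finset.sum_congr rfl fun i _ => hmul i,
        Finset.sum_ite_mem, Finset.univ_inter]

end IsJordanMultiplicativeOn

section StructuralMatrixAlgebra

variable {n : ℕ} {ρ : Fin n → Fin n → Prop}

def structuralSubalgebra (hrefl : ∀ i, ρ i i) (htrans : ∀ i j k, ρ i j → ρ j k → ρ i k) :
    Subalgebra ℂ (Matrix (Fin n) (Fin n) ℂ) where
  carrier := structuralMatrixAlgebra ρ
  mul_mem' {X Y} hX hY i j hij := by
    rw [Matrix.mul_apply]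
    refine Finset.sum_eq_zero fun k _ => ?_
    by_cases hik : ρ i k
    · rw [hY k j fun hkj => hij (htrans i k j hik hkj), mul_zero]
    · rw [hX i k hik, zero_mul]
  add_mem' hX hY i j hij := by rw [Matrix.add_apply, hX i j hij, hY i j hij, add_zero]
  algebraMap_mem' c i j hij := if_neg fun (h : i = j) => hij (h ▸ hrefl i)

theorem single_mem_structuralSubalgebra (hrefl : ∀ i, ρ i i)
    (htrans : ∀ i j k, ρ i j → ρ j k → ρ i k) (i : Fin n) :
    Matrix.single i i (1 : ℂ) ∈ structuralSubalgebra hrefl htrans := by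
  show ∀ a b, ¬ρ a b → Matrix.single i i (1 : ℂ) a b = 0
  intro a b hab
  exact Matrix.single_apply_of_ne _ _ _ _ _ fun h => hab (h.1 ▸ h.2 ▸ hrefl i)

end StructuralMatrixAlgebra

/-- An injective map on a structural matrix algebra preserving the
normalized Jordan product satisfies `φ(I − P) = I − φ(P)` for every idempotent `P`. -/
theorem jordan_mult_map_complement {n : ℕ} (ρ : Fin n → Fin n → Prop)
    (hrefl : ∀ i, ρ i i) (htrans : ∀ i j k, ρ i j → ρ j k → ρ i k)
    (φ : Matrix (Fin n) (Fin n) ℂ → Matrix (Fin n) (Fin n) ℂ)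
    (hinj : Set.InjOn φ (structuralMatrixAlgebra ρ))
    (hjord : ∀ X ∈ structuralMatrixAlgebra ρ, ∀ Y ∈ structuralMatrixAlgebra ρ,
      φ (njord X Y) = njord (φ X) (φ Y)) :
    ∀ P ∈ structuralMatrixAlgebra ρ, P * P = P → φ (1 - P) = 1 - φ P := by
  set A := structuralSubalgebra hrefl htrans
  have hφ : IsJordanMultiplicativeOn φ A := hjord
  have hA := single_mem_structuralSubalgebra hrefl htrans
  have hφ0 : φ 0 = 0 := hφ.map_zero_eq_zero hinj hA
  intro P hP (hPe : IsIdempotentElem P)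
  obtain ⟨g, hg, hgA, hg0, hgP⟩ := exists_orthogonalIdempotents_sum_eq hA hP hPe
  obtain ⟨h, hh, hhA, hh0, hhP⟩ :=
    exists_orthogonalIdempotents_sum_eq hA (A.sub_mem A.one_mem hP) hPe.one_sub
  have hF : OrthogonalIdempotents (Sum.elim g h) := hg.sumElim hh
    (by rw [hgP, hhP, mul_sub, mul_one, hPe.eq, sub_self])
    (by rw [hgP, hhP, sub_mul, one_mul, hPe.eq, sub_self])
  have hFA : ∀ x, Sum.elim g h x ∈ A := Sum.rec hgA hhA
  have hφF : CompleteOrthogonalIdempotents (φ ∘ Sum.elim g h) := by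
    refine OrthogonalIdempotents.completeOrthogonalIdempotents_of_card_le ?_ ?_ ?_
    · simpa only [hφ0, sub_zero, Function.comp_def]
        using hφ.orthogonalIdempotents_map_sub_map_zero hF hFA
    · exact fun x => hφ0 ▸ hinj.ne (hFA x) A.zero_mem (Sum.rec hg0 hh0 x)
    · simp [Matrix.rank_add_rank_one_sub_of_isIdempotentElem hPe]
  have hmap := hφ.map_sum hφ0 hF hFA hφF
  calc φ (1 - P) = ∑ j, φ (h j) := by simpa [hhP] using hmap (Finset.univ.map .inr)
    _ = 1 - ∑ i, φ (g i) := by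
      rw [eq_sub_iff_add_eq']
      exact (Fintype.sum_sum_type (φ ∘ Sum.elim g h)).symm.trans hφF.complete
    _ = 1 - φ P := by simpa [hgP] using (hmap (Finset.univ.map .inl)).symm
end

section
/- Let A_ρ ⊆ M_n(ℂ) be a structural matrix algebra and let φ : A_ρ → M_n(ℂ) be an injective map satisfying φ(X ∘ Y) = φ(X) ∘ φ(Y) for all X, Y ∈ A_ρ, where ∘ is the normalized Jordan product. Then φ is orthoadditive on idempotents: for all idempotents P, Q ∈ A_ρ with PQ = QP = 0, we have φ(P + Q) = φ(P) + φ(Q). -/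
namespace JordanOrtho

variable {n : ℕ}

local notation "M" => Matrix (Fin n) (Fin n) ℂ

/-! ### Trace and rank facts for idempotents -/

lemma trace_idem_eq_rank {e : M} (he : e * e = e) :
    e.trace = (e.rank : ℂ) := by
  classical
  have hff : e.mulVecLin ∘ₗ e.mulVecLin = e.mulVecLin := by
    rw [← Matrix.mulVecLin_mul, he]
  have hproj : LinearMap.IsProj (LinearMap.range e.mulVecLin) e.mulVecLin := by
    constructor
    · intro x; exact LinearMap.mem_range_self _ x
    · rintro x ⟨y, rfl⟩
      have := LinearMap.congr_fun hff y
      simpa using this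
  have htr := hproj.trace
  have hb : LinearMap.toMatrix (Pi.basisFun ℂ (Fin n)) (Pi.basisFun ℂ (Fin n)) e.mulVecLin = e := by
    rw [LinearMap.toMatrix_eq_toMatrix']
    have : e.mulVecLin = Matrix.toLin' e := rfl
    rw [this, LinearMap.toMatrix'_toLin']
  have hbr := LinearMap.trace_eq_matrix_trace ℂ (Pi.basisFun ℂ (Fin n)) e.mulVecLin
  rw [hb] at hbr
  rw [← hbr, htr, Matrix.rank]

lemma idem_trace_zero {e : M} (he : e * e = e)
    (h0 : e.trace = 0) : e = 0 := by
  classical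
  have hr : e.rank = 0 := by
    have := trace_idem_eq_rank he
    rw [h0] at this
    exact_mod_cast this.symm
  have hrange : LinearMap.range e.mulVecLin = ⊥ := by
    rw [Matrix.rank] at hr
    exact Submodule.finrank_eq_zero.mp hr
  have hz : e.mulVecLin = 0 := LinearMap.range_eq_bot.mp hrange
  have h1 : Matrix.toLin' e = Matrix.toLin' (0 : M) := by
    have h2 : e.mulVecLin = Matrix.toLin' e := rfl
    rw [← h2, hz]
    simp
  exact Matrix.toLin'.injective h1

lemma rank_pos_of_ne {e : M} (he : e * e = e) (h0 : e ≠ 0) : 1 ≤ e.rank := by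
  by_contra h
  have hr : e.rank = 0 := by omega
  apply h0
  apply idem_trace_zero he
  rw [trace_idem_eq_rank he, hr]; simp

/-! ### Pure algebra lemmas about idempotents -/

lemma half_cancel {X Y : M} (h : X + X = Y + Y) : X = Y := by
  have h2 : (2:ℂ) • X = (2:ℂ) • Y := by rw [two_smul, two_smul]; exact h
  exact smul_right_injective _ two_ne_zero h2

lemma L1 {a b : M} (hb : b * b = b)
    (h : a * b + b * a = a + a) : a * b = a ∧ b * a = a := by
  have h1 : b * a * b + b * a = b * a + b * a := by
    have := congrArg (fun X => b * X) h
    simpa [mul_add, ← mul_assoc, hb] using this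
  have h1' : b * a * b = b * a := add_right_cancel h1
  have h2 : a * b + b * a * b = a * b + a * b := by
    have := congrArg (fun X => X * b) h
    simpa [add_mul, mul_assoc, hb] using this
  have h2' : b * a * b = a * b := add_left_cancel h2
  have hcomm : a * b = b * a := by rw [← h2', h1']
  have hsum : a * b + a * b = a + a := by
    calc a * b + a * b = a * b + b * a := by rw [hcomm]
    _ = a + a := h
  have hab : a * b = a := half_cancel hsum
  exact ⟨hab, by rw [← hcomm]; exact hab⟩

lemma L2 {a b z : M} (ha : a * a = a)
    (hza : z * a = z) (haz : a * z = z)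
    (h : a * b + b * a = z + z) : a * b = z ∧ b * a = z := by
  have h1 : a * b + a * b * a = z + z := by
    have := congrArg (fun X => a * X) h
    simpa [mul_add, ← mul_assoc, ha, haz] using this
  have h2 : a * b * a + b * a = z + z := by
    have := congrArg (fun X => X * a) h
    simpa [add_mul, mul_assoc, ha, hza] using this
  have hcomm : a * b = b * a := by
    have h3 : a * b + a * b * a = a * b * a + b * a := by rw [h1, h2]
    have h4 := congrArg (fun X => X - a * b * a) h3
    simpa [add_sub_cancel_right] using h4
  have hsum : a * b + a * b = z + z := by
    calc a * b + a * b = a * b + b * a := by rw [hcomm]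
    _ = z + z := h
  have hab : a * b = z := half_cancel hsum
  exact ⟨hab, by rw [← hcomm]; exact hab⟩

/-! ### Membership lemmas for the structural matrix algebra -/

variable {ρ : Fin n → Fin n → Prop}

lemma mem_def {X : M} (hX : X ∈ structuralMatrixAlgebra ρ) :
    ∀ i j, ¬ ρ i j → X i j = 0 := hX

lemma mem_of {X : M} (h : ∀ i j, ¬ ρ i j → X i j = 0) :
    X ∈ structuralMatrixAlgebra ρ := h

lemma zero_mem : (0 : M) ∈ structuralMatrixAlgebra ρ :=
  mem_of fun _ _ _ => rfl

lemma one_mem (hrefl : ∀ i, ρ i i) : (1 : M) ∈ structuralMatrixAlgebra ρ := by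
  apply mem_of
  intro i j hij
  have : i ≠ j := by rintro rfl; exact hij (hrefl i)
  exact Matrix.one_apply_ne this

lemma add_mem {X Y : M} (hX : X ∈ structuralMatrixAlgebra ρ)
    (hY : Y ∈ structuralMatrixAlgebra ρ) : X + Y ∈ structuralMatrixAlgebra ρ := by
  apply mem_of
  intro i j hij
  rw [Matrix.add_apply, hX i j hij, hY i j hij, add_zero]

lemma sub_mem {X Y : M} (hX : X ∈ structuralMatrixAlgebra ρ)
    (hY : Y ∈ structuralMatrixAlgebra ρ) : X - Y ∈ structuralMatrixAlgebra ρ := by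
  apply mem_of
  intro i j hij
  rw [Matrix.sub_apply, hX i j hij, hY i j hij, sub_zero]

lemma mul_mem (htrans : ∀ i j k, ρ i j → ρ j k → ρ i k) {X Y : M}
    (hX : X ∈ structuralMatrixAlgebra ρ)
    (hY : Y ∈ structuralMatrixAlgebra ρ) : X * Y ∈ structuralMatrixAlgebra ρ := by
  apply mem_of
  intro i j hij
  rw [Matrix.mul_apply]
  apply Finset.sum_eq_zero
  intro k _
  by_cases h1 : ρ i k
  · have h2 : ¬ ρ k j := fun h2 => hij (htrans i k j h1 h2)
    rw [hY k j h2, mul_zero]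
  · rw [hX i k h1, zero_mul]

lemma pow_mem (hrefl : ∀ i, ρ i i) (htrans : ∀ i j k, ρ i j → ρ j k → ρ i k) {X : M}
    (hX : X ∈ structuralMatrixAlgebra ρ) (m : ℕ) : X ^ m ∈ structuralMatrixAlgebra ρ := by
  induction m with
  | zero => simpa using one_mem hrefl
  | succ m ih => rw [pow_succ]; exact mul_mem htrans ih hX


/-! ### The block-diagonal part and the height function -/

open Classical in
/-- The part of a matrix supported on the symmetric (block) pairs of `ρ`. -/
noncomputable def blockPart (ρ : Fin n → Fin n → Prop) (X : M) : M :=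
  Matrix.of fun i j => if ρ i j ∧ ρ j i then X i j else 0

lemma blockPart_apply_of (ρ : Fin n → Fin n → Prop) (X : M) {i j : Fin n}
    (h : ρ i j ∧ ρ j i) : blockPart ρ X i j = X i j := by
  simp only [blockPart, Matrix.of_apply, if_pos h]

lemma blockPart_apply_not (ρ : Fin n → Fin n → Prop) (X : M) {i j : Fin n}
    (h : ¬ (ρ i j ∧ ρ j i)) : blockPart ρ X i j = 0 := by
  simp only [blockPart, Matrix.of_apply, if_neg h]

lemma blockPart_supp (ρ : Fin n → Fin n → Prop) (X : M) {i j : Fin n}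
    (h : blockPart ρ X i j ≠ 0) : ρ i j ∧ ρ j i := by
  by_contra hc
  exact h (blockPart_apply_not ρ X hc)

lemma blockPart_mem (ρ : Fin n → Fin n → Prop) (X : M) :
    blockPart ρ X ∈ structuralMatrixAlgebra ρ := by
  apply mem_of
  intro i j hij
  apply blockPart_apply_not
  rintro ⟨h1, _⟩
  exact hij h1

lemma blockPart_add (ρ : Fin n → Fin n → Prop) (X Y : M) :
    blockPart ρ (X + Y) = blockPart ρ X + blockPart ρ Y := by
  ext i j
  by_cases h : ρ i j ∧ ρ j i
  · simp only [blockPart_apply_of ρ _ h, Matrix.add_apply, blockPart_apply_of ρ _ h]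
  · simp only [blockPart_apply_not ρ _ h, Matrix.add_apply, blockPart_apply_not ρ _ h, add_zero]

lemma blockPart_idem (ρ : Fin n → Fin n → Prop) (X : M) :
    blockPart ρ (blockPart ρ X) = blockPart ρ X := by
  ext i j
  by_cases h : ρ i j ∧ ρ j i
  · rw [blockPart_apply_of ρ _ h, blockPart_apply_of ρ _ h]
  · rw [blockPart_apply_not ρ _ h, blockPart_apply_not ρ _ h]

lemma blockPart_mul (htrans : ∀ i j k, ρ i j → ρ j k → ρ i k) {X Y : M}
    (hX : X ∈ structuralMatrixAlgebra ρ) (hY : Y ∈ structuralMatrixAlgebra ρ) :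
    blockPart ρ (X * Y) = blockPart ρ X * blockPart ρ Y := by
  ext i j
  by_cases h : ρ i j ∧ ρ j i
  · rw [blockPart_apply_of ρ _ h, Matrix.mul_apply, Matrix.mul_apply]
    apply Finset.sum_congr rfl
    intro k _
    by_cases h1 : ρ i k
    · by_cases h2 : ρ k j
      · have hki : ρ k i := htrans k j i h2 h.2
        have hjk : ρ j k := htrans j i k h.2 h1
        rw [blockPart_apply_of ρ X ⟨h1, hki⟩, blockPart_apply_of ρ Y ⟨h2, hjk⟩]
      · rw [hY k j h2, mul_zero]
        by_cases h3 : ρ k j ∧ ρ j k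
        · exact absurd h3.1 h2
        · rw [blockPart_apply_not ρ Y h3, mul_zero]
    · rw [hX i k h1, zero_mul]
      by_cases h3 : ρ i k ∧ ρ k i
      · exact absurd h3.1 h1
      · rw [blockPart_apply_not ρ X h3, zero_mul]
  · rw [blockPart_apply_not ρ _ h, Matrix.mul_apply]
    symm
    apply Finset.sum_eq_zero
    intro k _
    by_cases h1 : ρ i k ∧ ρ k i
    · by_cases h2 : ρ k j ∧ ρ j k
      · exact absurd ⟨htrans i k j h1.1 h2.1, htrans j k i h2.2 h1.2⟩ h
      · rw [blockPart_apply_not ρ Y h2, mul_zero]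
    · rw [blockPart_apply_not ρ X h1, zero_mul]

open Classical in
/-- The height of an index in the quasi-order : number of strict predecessors. -/
noncomputable def hgt (ρ : Fin n → Fin n → Prop) (i : Fin n) : ℕ :=
  (Finset.univ.filter (fun k => ρ k i ∧ ¬ ρ i k)).card

lemma hgt_lt (htrans : ∀ i j k, ρ i j → ρ j k → ρ i k) {i j : Fin n}
    (h1 : ρ i j) (h2 : ¬ ρ j i) : hgt ρ i < hgt ρ j := by
  classical
  apply Finset.card_lt_card
  constructor
  · intro k hk
    simp only [Finset.mem_filter, Finset.mem_univ, true_and] at hk ⊢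
    refine ⟨htrans k i j hk.1 h1, fun hjk => hk.2 (htrans i j k h1 hjk)⟩
  · intro hsub
    have hi : i ∈ Finset.univ.filter (fun k => ρ k j ∧ ¬ ρ j k) := by
      simp only [Finset.mem_filter, Finset.mem_univ, true_and]
      exact ⟨h1, h2⟩
    have hii := hsub hi
    simp only [Finset.mem_filter, Finset.mem_univ, true_and] at hii
    exact hii.2 hii.1

lemma hgt_lt_n (hn : 0 < n) (i : Fin n) : hgt ρ i < n := by
  classical
  have hsub : Finset.univ.filter (fun k => ρ k i ∧ ¬ ρ i k) ⊆ Finset.univ.erase i := by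
    intro k hk
    simp only [Finset.mem_filter, Finset.mem_univ, true_and] at hk
    apply Finset.mem_erase.mpr
    refine ⟨?_, Finset.mem_univ k⟩
    rintro rfl
    exact hk.2 hk.1
  have := Finset.card_le_card hsub
  rw [Finset.card_erase_of_mem (Finset.mem_univ i)] at this
  simp only [Finset.card_univ, Fintype.card_fin] at this
  unfold hgt
  omega


/-! ### Strictly supported matrices are nilpotent -/

lemma strict_pow_supp (htrans : ∀ i j k, ρ i j → ρ j k → ρ i k) {N : M}
    (hNs : ∀ i j, N i j ≠ 0 → ρ i j ∧ ¬ ρ j i) :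
    ∀ m, 1 ≤ m → ∀ i j, (N ^ m) i j ≠ 0 → hgt ρ i + m ≤ hgt ρ j := by
  intro m
  induction m with
  | zero => omega
  | succ m ih =>
    intro _ i j h
    by_cases hm : m = 0
    · subst hm
      rw [pow_one] at h
      have := hgt_lt htrans (hNs i j h).1 (hNs i j h).2
      omega
    · rw [pow_succ, Matrix.mul_apply] at h
      obtain ⟨k, _, hk⟩ := Finset.exists_ne_zero_of_sum_ne_zero h
      have h1 : (N ^ m) i k ≠ 0 := fun hc => hk (by rw [hc, zero_mul])
      have h2 : N k j ≠ 0 := fun hc => hk (by rw [hc, mul_zero])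
      have := ih (by omega) i k h1
      have := hgt_lt htrans (hNs k j h2).1 (hNs k j h2).2
      omega

lemma strict_pow_zero (hn : 0 < n) (htrans : ∀ i j k, ρ i j → ρ j k → ρ i k) {N : M}
    (hNs : ∀ i j, N i j ≠ 0 → ρ i j ∧ ¬ ρ j i) : N ^ n = 0 := by
  ext i j
  rw [Matrix.zero_apply]
  by_contra h
  have h1 := strict_pow_supp htrans hNs n hn i j h
  have h2 := hgt_lt_n (ρ := ρ) hn j
  omega

/-! ### The chain step: every nonzero idempotent of the SMA dominates a trace-one
idempotent of the SMA. -/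

lemma chain_step (hrefl : ∀ i, ρ i i) (htrans : ∀ i j k, ρ i j → ρ j k → ρ i k)
    {P : M} (hP : P ∈ structuralMatrixAlgebra ρ) (hPP : P * P = P) (hne : P ≠ 0) :
    ∃ P', P' ∈ structuralMatrixAlgebra ρ ∧ P' * P' = P' ∧ P' * P = P' ∧ P * P' = P' ∧
      P'.trace + 1 = P.trace ∧ P' ≠ P := by
  classical
  have hn : 0 < n := by
    rcases Nat.eq_zero_or_pos n with h | h
    · exfalso; apply hne; subst h; ext i j; exact i.elim0
    · exact h
  obtain ⟨B, hBdef⟩ : ∃ B, B = blockPart ρ P := ⟨_, rfl⟩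
  have hBmem : B ∈ structuralMatrixAlgebra ρ := hBdef ▸ blockPart_mem ρ P
  have hB : B * B = B := by
    rw [hBdef, ← blockPart_mul htrans hP hP, hPP]
  obtain ⟨N, hNdef⟩ : ∃ N : M, N = B + P - (B * P + B * P) := ⟨_, rfl⟩
  obtain ⟨s, hsdef⟩ : ∃ s : M, s = 1 - N := ⟨_, rfl⟩
  have hNmem : N ∈ structuralMatrixAlgebra ρ := hNdef ▸
    sub_mem (add_mem hBmem hP) (add_mem (mul_mem htrans hBmem hP) (mul_mem htrans hBmem hP))
  -- s * P = B * s
  have hNP : N * P = P - B * P := by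
    rw [hNdef, sub_mul, add_mul, add_mul, mul_assoc, hPP]
    abel
  have hBN : B * N = B - B * P := by
    rw [hNdef, mul_sub, mul_add, mul_add, ← mul_assoc, hB]
    abel
  have key1 : s * P = B * s := by
    rw [hsdef, sub_mul, one_mul, mul_sub, mul_one, hNP, hBN]
    abel
  -- block part of N vanishes
  have hbpN : blockPart ρ N = 0 := by
    have hbpB : blockPart ρ B = B := by rw [hBdef]; exact blockPart_idem ρ P
    have hbpBP : blockPart ρ (B * P) = B := by
      rw [blockPart_mul htrans hBmem hP, hbpB, ← hBdef, hB]
    have hsplit : blockPart ρ N = blockPart ρ (B + P) - blockPart ρ (B * P + B * P) := by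
      rw [hNdef]
      ext i j
      by_cases h : ρ i j ∧ ρ j i
      · simp only [Matrix.sub_apply, blockPart_apply_of ρ _ h]
      · simp only [Matrix.sub_apply, blockPart_apply_not ρ _ h, sub_zero, sub_self]
    rw [hsplit, blockPart_add, blockPart_add, hbpBP, hbpB, ← hBdef]
    abel
  have hNs : ∀ i j, N i j ≠ 0 → ρ i j ∧ ¬ ρ j i := by
    intro i j h
    by_cases h1 : ρ i j
    · refine ⟨h1, fun h2 => ?_⟩
      have hh := blockPart_apply_of ρ N ⟨h1, h2⟩
      rw [hbpN] at hh
      exact h (by rw [← hh]; rfl)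
    · exact absurd (hNmem i j h1) h
  have hNn : N ^ n = 0 := strict_pow_zero hn htrans hNs
  obtain ⟨T, hTdef⟩ : ∃ T : M, T = ∑ i ∈ Finset.range n, N ^ i := ⟨_, rfl⟩
  have hTmem : T ∈ structuralMatrixAlgebra ρ := by
    apply mem_of
    intro i j hij
    rw [hTdef, Matrix.sum_apply]
    apply Finset.sum_eq_zero
    intro k _
    exact pow_mem hrefl htrans hNmem k i j hij
  have hsmem : s ∈ structuralMatrixAlgebra ρ := hsdef ▸ sub_mem (one_mem hrefl) hNmem
  have hTs : T * s = 1 := by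
    have h1 : T * (N - 1) = N ^ n - 1 := hTdef ▸ geom_sum_mul N n
    rw [hNn, zero_sub] at h1
    have h2 : T * s = -(T * (N - 1)) := by
      rw [hsdef, mul_sub, mul_sub, mul_one, neg_sub]
    rw [h2, h1, neg_neg]
  have hsT : s * T = 1 := by
    have h1 : (N - 1) * T = N ^ n - 1 := hTdef ▸ mul_geom_sum N n
    rw [hNn, zero_sub] at h1
    have h2 : s * T = -((N - 1) * T) := by
      rw [hsdef, sub_mul, sub_mul, one_mul, neg_sub]
    rw [h2, h1, neg_neg]
  have hPTB : P = T * B * s := by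
    calc P = (T * s) * P := by rw [hTs, one_mul]
    _ = T * (s * P) := by rw [mul_assoc]
    _ = T * (B * s) := by rw [key1]
    _ = T * B * s := by rw [mul_assoc]
  have hBne : B ≠ 0 := by
    intro h
    apply hne
    rw [hPTB, h, mul_zero, zero_mul]
  obtain ⟨i₀, j₀, hc⟩ : ∃ i j, B i j ≠ 0 := by
    by_contra h
    push_neg at h
    exact hBne (by ext i j; exact h i j)
  obtain ⟨c, hcdef⟩ : ∃ c : ℂ, c = B i₀ j₀ := ⟨_, rfl⟩
  rw [← hcdef] at hc
  have hρ0 : ρ i₀ j₀ ∧ ρ j₀ i₀ := blockPart_supp ρ P (hBdef ▸ hcdef ▸ hc)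
  obtain ⟨e, hedef⟩ : ∃ e : M, e = Matrix.of fun i j => B i j₀ * B i₀ j * c⁻¹ := ⟨_, rfl⟩
  have heapp : ∀ i j, e i j = B i j₀ * B i₀ j * c⁻¹ := by
    intro i j; rw [hedef]; rfl
  have hBBsum : ∀ i j, ∑ k, B i k * B k j = B i j := by
    intro i j
    rw [← Matrix.mul_apply, hB]
  have hee : e * e = e := by
    ext i j
    rw [Matrix.mul_apply, heapp]
    calc ∑ k, e i k * e k j
        = ∑ k, (B i j₀ * B i₀ j * (c⁻¹ * c⁻¹)) * (B i₀ k * B k j₀) := by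
          apply Finset.sum_congr rfl; intro k _; rw [heapp, heapp]; ring
      _ = (B i j₀ * B i₀ j * (c⁻¹ * c⁻¹)) * ∑ k, B i₀ k * B k j₀ := by
          rw [Finset.mul_sum]
      _ = (B i j₀ * B i₀ j * (c⁻¹ * c⁻¹)) * c := by rw [hBBsum i₀ j₀, ← hcdef]
      _ = B i j₀ * B i₀ j * c⁻¹ := by
          field_simp
  have hBe : B * e = e := by
    ext i j
    rw [Matrix.mul_apply, heapp]
    calc ∑ k, B i k * e k j
        = (∑ k, B i k * B k j₀) * (B i₀ j * c⁻¹) := by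
          rw [Finset.sum_mul]; apply Finset.sum_congr rfl; intro k _; rw [heapp]; ring
      _ = B i j₀ * B i₀ j * c⁻¹ := by rw [hBBsum i j₀, mul_assoc]
  have heB : e * B = e := by
    ext i j
    rw [Matrix.mul_apply, heapp]
    calc ∑ k, e i k * B k j
        = (B i j₀ * c⁻¹) * ∑ k, B i₀ k * B k j := by
          rw [Finset.mul_sum]; apply Finset.sum_congr rfl; intro k _; rw [heapp]; ring
      _ = B i j₀ * B i₀ j * c⁻¹ := by rw [hBBsum i₀ j]; ring
  have htre : e.trace = 1 := by
    unfold Matrix.trace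
    calc ∑ i, Matrix.diag e i = ∑ i, B i₀ i * B i j₀ * c⁻¹ := by
          apply Finset.sum_congr rfl; intro i _
          show e i i = _
          rw [heapp]; ring
      _ = (∑ i, B i₀ i * B i j₀) * c⁻¹ := by rw [Finset.sum_mul]
      _ = c * c⁻¹ := by rw [hBBsum i₀ j₀, ← hcdef]
      _ = 1 := mul_inv_cancel₀ hc
  have heA : e ∈ structuralMatrixAlgebra ρ := by
    apply mem_of
    intro i j hij
    rw [heapp]
    by_cases h1 : B i j₀ = 0
    · rw [h1, zero_mul, zero_mul]
    by_cases h2 : B i₀ j = 0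
    · rw [h2, mul_zero, zero_mul]
    exfalso
    have hs1 := blockPart_supp ρ P (hBdef ▸ h1)
    have hs2 := blockPart_supp ρ P (hBdef ▸ h2)
    exact hij (htrans i i₀ j (htrans i j₀ i₀ hs1.1 hρ0.2) hs2.1)
  obtain ⟨e', he'def⟩ : ∃ e' : M, e' = T * e * s := ⟨_, rfl⟩
  have he'mem : e' ∈ structuralMatrixAlgebra ρ := he'def ▸
    mul_mem htrans (mul_mem htrans hTmem heA) hsmem
  have hstep : ∀ Y : M, s * (T * Y) = Y := by
    intro Y; rw [← mul_assoc, hsT, one_mul]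
  have hmid : ∀ X Y : M, (T * X * s) * (T * Y * s) = T * (X * Y) * s := by
    intro X Y
    calc (T * X * s) * (T * Y * s) = T * (X * (s * (T * (Y * s)))) := by
          simp only [mul_assoc]
      _ = T * (X * (Y * s)) := by rw [hstep]
      _ = T * (X * Y) * s := by simp only [mul_assoc]
  have he'e' : e' * e' = e' := by
    rw [he'def, hmid, hee]
  have hPe' : P * e' = e' := by
    rw [hPTB, he'def, hmid, hBe]
  have he'P : e' * P = e' := by
    rw [hPTB, he'def, hmid, heB]
  have htre' : e'.trace = 1 := by
    rw [he'def]
    calc (T * e * s).trace = (s * (T * e)).trace := Matrix.trace_mul_comm (T * e) s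
      _ = ((s * T) * e).trace := by rw [mul_assoc]
      _ = e.trace := by rw [hsT, one_mul]
      _ = 1 := htre
  refine ⟨P - e', sub_mem hP he'mem, ?_, ?_, ?_, ?_, ?_⟩
  · rw [sub_mul, mul_sub, mul_sub, hPP, hPe', he'P, he'e']
    abel
  · rw [sub_mul, hPP, he'P]
  · rw [mul_sub, hPP, hPe']
  · rw [Matrix.trace_sub, htre']
    ring
  · intro h
    have h0 : e' = 0 := by
      have hh := congrArg (fun X => P - X) h
      simpa using hh
    rw [h0, Matrix.trace_zero] at htre'
    exact one_ne_zero htre'.symm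


lemma rank_le_n (e : M) : e.rank ≤ n := by
  simpa using e.rank_le_card_width

lemma idem_add {x y : M} (hx : x * x = x) (hy : y * y = y)
    (hxy : x * y = 0) (hyx : y * x = 0) : (x + y) * (x + y) = x + y := by
  rw [add_mul, mul_add, mul_add, hx, hy, hxy, hyx]
  abel

lemma idem_sub_of_le {x y : M} (hx : x * x = x) (hy : y * y = y)
    (hxy : x * y = x) (hyx : y * x = x) : (y - x) * (y - x) = y - x := by
  rw [sub_mul, mul_sub, mul_sub, hy, hx, hxy, hyx]
  abel

end JordanOrtho

/-- An injective map on a structural matrix algebra preserving the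
normalized Jordan product is orthoadditive on idempotents. -/
theorem jordan_mult_map_orthoadditive {n : ℕ} (ρ : Fin n → Fin n → Prop)
    (hrefl : ∀ i, ρ i i) (htrans : ∀ i j k, ρ i j → ρ j k → ρ i k)
    (φ : Matrix (Fin n) (Fin n) ℂ → Matrix (Fin n) (Fin n) ℂ)
    (hinj : Set.InjOn φ (structuralMatrixAlgebra ρ))
    (hjord : ∀ X ∈ structuralMatrixAlgebra ρ, ∀ Y ∈ structuralMatrixAlgebra ρ,
      φ (njord X Y) = njord (φ X) (φ Y)) :
    ∀ P ∈ structuralMatrixAlgebra ρ, ∀ Q ∈ structuralMatrixAlgebra ρ,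
      P * P = P → Q * Q = Q → P * Q = 0 → Q * P = 0 →
      φ (P + Q) = φ P + φ Q := by
  classical
  open JordanOrtho in
  intro P hP Q hQ hPP hQQ hPQ hQP
  set SMA := structuralMatrixAlgebra ρ with hSMA
  -- Jordan multiplicativity in polarized form
  have jmul : ∀ X ∈ SMA, ∀ Y ∈ SMA, ∀ W : Matrix (Fin n) (Fin n) ℂ,
      X * Y + Y * X = W + W → φ X * φ Y + φ Y * φ X = φ W + φ W := by
    intro X hX Y hY W h
    have h1 : njord X Y = W := by
      unfold njord
      rw [h, ← two_smul ℂ W, smul_smul]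
      norm_num
    have h2 := hjord X hX Y hY
    rw [h1] at h2
    have h3 : (2:ℂ) • φ W = (2:ℂ) • ((1/2 : ℂ) • (φ X * φ Y + φ Y * φ X)) :=
      congrArg (fun Z => (2:ℂ) • Z) h2
    rw [smul_smul] at h3
    have h4 : (2:ℂ) * (1/2) = 1 := by norm_num
    rw [h4, one_smul, two_smul] at h3
    exact h3.symm
  have hzero_mem : (0 : Matrix (Fin n) (Fin n) ℂ) ∈ SMA := JordanOrtho.zero_mem
  have hone_mem : (1 : Matrix (Fin n) (Fin n) ℂ) ∈ SMA := JordanOrtho.one_mem hrefl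
  -- φ of an idempotent is idempotent
  have idem_phi : ∀ E ∈ SMA, E * E = E → φ E * φ E = φ E := by
    intro E hE hEE
    have h := jmul E hE E hE E (by rw [hEE])
    exact half_cancel h
  set z := φ 0 with hzdef
  have hz_idem : z * z = z := idem_phi 0 hzero_mem (by rw [mul_zero])
  have absorb : ∀ E ∈ SMA, E * E = E → z * φ E = z ∧ φ E * z = z := by
    intro E hE hEE
    have h := jmul 0 hzero_mem E hE 0 (by simp)
    exact L1 (idem_phi E hE hEE) h
  have le_phi : ∀ E ∈ SMA, E * E = E → ∀ F ∈ SMA, F * F = F → E * F = E → F * E = E →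
      φ E * φ F = φ E ∧ φ F * φ E = φ E := by
    intro E hE hEE F hF hFF hEF hFE
    have h := jmul E hE F hF E (by rw [hEF, hFE])
    exact L1 (idem_phi F hF hFF) h
  have orth_phi : ∀ E ∈ SMA, E * E = E → ∀ F ∈ SMA, F * F = F → E * F = 0 → F * E = 0 →
      φ E * φ F = z ∧ φ F * φ E = z := by
    intro E hE hEE F hF hFF hEF hFE
    have h := jmul E hE F hF 0 (by rw [hEF, hFE, add_zero])
    have habs := absorb E hE hEE
    exact L2 (idem_phi E hE hEE) habs.1 habs.2 h
  -- lower bound on ranks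
  have ranklb : ∀ m : ℕ, ∀ E, E ∈ SMA → E * E = E → E.rank ≤ m →
      E.rank ≤ (φ E - z).rank := by
    intro m
    induction m with
    | zero =>
      intro E hE hEE hr
      have h0 : E.rank = 0 := Nat.le_zero.mp hr
      rw [h0]; exact Nat.zero_le _
    | succ m ih =>
      intro E hE hEE hr
      by_cases h0 : E = 0
      · have : E.rank = 0 := by rw [h0]; simp
        rw [this]; exact Nat.zero_le _
      · obtain ⟨E', hE'mem, hE'idem, hE'E, hEE', htr, hne'⟩ :=
          chain_step hrefl htrans hE hEE h0
        have hrr : E'.rank + 1 = E.rank := by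
          have h1 : (E'.rank : ℂ) + 1 = (E.rank : ℂ) := by
            rw [← trace_idem_eq_rank hE'idem, ← trace_idem_eq_rank hEE]; exact htr
          exact_mod_cast h1
        have ih' := ih E' hE'mem hE'idem (by omega)
        have hle := le_phi E' hE'mem hE'idem E hE hEE hE'E hEE'
        have haa : φ E * φ E = φ E := idem_phi E hE hEE
        have ha'a' : φ E' * φ E' = φ E' := idem_phi E' hE'mem hE'idem
        have habs := absorb E hE hEE
        have habs' := absorb E' hE'mem hE'idem
        have hd : (φ E - φ E') * (φ E - φ E') = φ E - φ E' :=
          idem_sub_of_le ha'a' haa hle.1 hle.2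
        have hdne : φ E - φ E' ≠ 0 := by
          intro hcon
          exact hne' (hinj hE'mem hE (sub_eq_zero.mp hcon).symm)
        have hA : (φ E - z) * (φ E - z) = φ E - z :=
          idem_sub_of_le hz_idem haa habs.1 habs.2
        have hA' : (φ E' - z) * (φ E' - z) = φ E' - z :=
          idem_sub_of_le hz_idem ha'a' habs'.1 habs'.2
        have htr2 : ((φ E - z).rank : ℂ) = ((φ E' - z).rank : ℂ) + ((φ E - φ E').rank : ℂ) := by
          rw [← trace_idem_eq_rank hA, ← trace_idem_eq_rank hA', ← trace_idem_eq_rank hd,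
            ← Matrix.trace_add]
          congr 1
          abel
        have htr3 : (φ E - z).rank = (φ E' - z).rank + (φ E - φ E').rank := by
          exact_mod_cast htr2
        have hd1 : 1 ≤ (φ E - φ E').rank := rank_pos_of_ne hd hdne
        omega
  -- exact rank equality
  have traceEq : ∀ E, E ∈ SMA → E * E = E → (φ E - z).rank = E.rank := by
    intro E hE hEE
    have h1 : E.rank ≤ (φ E - z).rank := ranklb E.rank E hE hEE le_rfl
    have hF : (1 : Matrix (Fin n) (Fin n) ℂ) - E ∈ SMA := JordanOrtho.sub_mem hone_mem hE
    have hFF : ((1 : Matrix (Fin n) (Fin n) ℂ) - E) * (1 - E) = 1 - E := by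
      rw [sub_mul, one_mul, mul_sub, mul_one, hEE]
      abel
    have hEF : E * (1 - E) = 0 := by rw [mul_sub, mul_one, hEE, sub_self]
    have hFE : (1 - E) * E = 0 := by rw [sub_mul, one_mul, hEE, sub_self]
    have h2 : (1 - E).rank ≤ (φ (1 - E) - z).rank := ranklb _ _ hF hFF le_rfl
    have horth := orth_phi E hE hEE (1 - E) hF hFF hEF hFE
    have habsE := absorb E hE hEE
    have habsF := absorb (1 - E) hF hFF
    have haa : φ E * φ E = φ E := idem_phi E hE hEE
    have hbb : φ (1 - E) * φ (1 - E) = φ (1 - E) := idem_phi (1 - E) hF hFF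
    have hprod : (φ E - z) * (φ (1 - E) - z) = 0 := by
      rw [sub_mul, mul_sub, mul_sub, horth.1, habsE.2, habsF.1, hz_idem]
      abel
    have hprod' : (φ (1 - E) - z) * (φ E - z) = 0 := by
      rw [sub_mul, mul_sub, mul_sub, horth.2, habsF.2, habsE.1, hz_idem]
      abel
    have hA : (φ E - z) * (φ E - z) = φ E - z :=
      idem_sub_of_le hz_idem haa habsE.1 habsE.2
    have hB : (φ (1 - E) - z) * (φ (1 - E) - z) = φ (1 - E) - z :=
      idem_sub_of_le hz_idem hbb habsF.1 habsF.2
    have hsum_idem := idem_add hA hB hprod hprod'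
    have hsum_rank : ((φ E - z) + (φ (1 - E) - z)).rank
        = (φ E - z).rank + (φ (1 - E) - z).rank := by
      have hcast : (((φ E - z) + (φ (1 - E) - z)).rank : ℂ)
          = ((φ E - z).rank : ℂ) + ((φ (1 - E) - z).rank : ℂ) := by
        rw [← trace_idem_eq_rank hsum_idem, ← trace_idem_eq_rank hA, ← trace_idem_eq_rank hB,
          Matrix.trace_add]
      exact_mod_cast hcast
    have hsum_le : ((φ E - z) + (φ (1 - E) - z)).rank ≤ n := rank_le_n _
    have hEFrank : E.rank + (1 - E).rank = n := by
      have hcast : (E.rank : ℂ) + ((1 - E).rank : ℂ) = (n : ℂ) := by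
        rw [← trace_idem_eq_rank hEE, ← trace_idem_eq_rank hFF, ← Matrix.trace_add]
        have : E + (1 - E) = (1 : Matrix (Fin n) (Fin n) ℂ) := by abel
        rw [this, Matrix.trace_one]
        simp
      exact_mod_cast hcast
    omega
  -- z = 0
  have hone_idem : (1 : Matrix (Fin n) (Fin n) ℂ) * 1 = 1 := one_mul 1
  have hz0 : z = 0 := by
    have hφ1 : φ 1 * φ 1 = φ 1 := idem_phi 1 hone_mem hone_idem
    have habs1 := absorb 1 hone_mem hone_idem
    have hc_idem : (φ 1 - z) * (φ 1 - z) = φ 1 - z :=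
      idem_sub_of_le hz_idem hφ1 habs1.1 habs1.2
    have hrc : (φ 1 - z).rank = n := by
      rw [traceEq 1 hone_mem hone_idem]
      simp
    have hI_idem : ((1 : Matrix (Fin n) (Fin n) ℂ) - (φ 1 - z)) * (1 - (φ 1 - z))
        = 1 - (φ 1 - z) := by
      apply idem_sub_of_le hc_idem (one_mul 1)
      · exact mul_one _
      · exact one_mul _
    have htr0 : ((1 : Matrix (Fin n) (Fin n) ℂ) - (φ 1 - z)).trace = 0 := by
      rw [Matrix.trace_sub, Matrix.trace_one, trace_idem_eq_rank hc_idem, hrc]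
      simp
    have hcI : (1 : Matrix (Fin n) (Fin n) ℂ) - (φ 1 - z) = 0 :=
      idem_trace_zero hI_idem htr0
    have hφ1eq : φ 1 = 1 + z := by
      have h5 : φ 1 - z = 1 := by
        have := sub_eq_zero.mp hcI
        exact this.symm
      calc φ 1 = (φ 1 - z) + z := by abel
      _ = 1 + z := by rw [h5]
    have h6 : z * φ 1 = z := habs1.1
    rw [hφ1eq, mul_add, mul_one, hz_idem] at h6
    have h7 : z + z = z + 0 := by rw [add_zero]; exact h6
    exact add_left_cancel h7
  -- trace preservation on idempotents
  have tphi : ∀ E, E ∈ SMA → E * E = E → (φ E).trace = E.trace := by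
    intro E hE hEE
    have h1 := traceEq E hE hEE
    rw [hz0, sub_zero] at h1
    rw [trace_idem_eq_rank (idem_phi E hE hEE), h1, ← trace_idem_eq_rank hEE]
  -- final assembly
  have hRmem : P + Q ∈ SMA := JordanOrtho.add_mem hP hQ
  have hRR : (P + Q) * (P + Q) = P + Q := by
    rw [add_mul, mul_add, mul_add, hPP, hPQ, hQP, hQQ]
    abel
  have hp : φ P * φ P = φ P := idem_phi P hP hPP
  have hq : φ Q * φ Q = φ Q := idem_phi Q hQ hQQ
  have horth := orth_phi P hP hPP Q hQ hQQ hPQ hQP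
  have horth1 : φ P * φ Q = 0 := by rw [horth.1, hz0]
  have horth2 : φ Q * φ P = 0 := by rw [horth.2, hz0]
  have hPR : P * (P + Q) = P := by rw [mul_add, hPP, hPQ, add_zero]
  have hRP : (P + Q) * P = P := by rw [add_mul, hPP, hQP, add_zero]
  have hQR : Q * (P + Q) = Q := by rw [mul_add, hQP, hQQ, zero_add]
  have hRQ : (P + Q) * Q = Q := by rw [add_mul, hPQ, hQQ, zero_add]
  have hleP := le_phi P hP hPP (P + Q) hRmem hRR hPR hRP
  have hleQ := le_phi Q hQ hQQ (P + Q) hRmem hRR hQR hRQ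
  have hpq_idem : (φ P + φ Q) * (φ P + φ Q) = φ P + φ Q := idem_add hp hq horth1 horth2
  have hr : φ (P + Q) * φ (P + Q) = φ (P + Q) := idem_phi (P + Q) hRmem hRR
  have hsum_le1 : (φ P + φ Q) * φ (P + Q) = φ P + φ Q := by
    rw [add_mul, hleP.1, hleQ.1]
  have hsum_le2 : φ (P + Q) * (φ P + φ Q) = φ P + φ Q := by
    rw [mul_add, hleP.2, hleQ.2]
  have ht_idem : (φ (P + Q) - (φ P + φ Q)) * (φ (P + Q) - (φ P + φ Q))
      = φ (P + Q) - (φ P + φ Q) :=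
    idem_sub_of_le hpq_idem hr hsum_le1 hsum_le2
  have htr_t : (φ (P + Q) - (φ P + φ Q)).trace = 0 := by
    rw [Matrix.trace_sub, Matrix.trace_add, tphi _ hRmem hRR, tphi _ hP hPP, tphi _ hQ hQQ,
      Matrix.trace_add]
    ring
  have ht0 := idem_trace_zero ht_idem htr_t
  have := sub_eq_zero.mp ht0
  exact this
end

section
/- Let A_ρ ⊆ M_n(ℂ) be a structural matrix algebra such that every central class of A_ρ has at least 2 elements. Then every injective map φ : A_ρ → M_n(ℂ) satisfying φ(XY) = φ(X)φ(Y) for all X, Y ∈ A_ρ is additive. -/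
open Matrix

namespace Matrix

theorem single_add_single_mul_single_add_single {ι α : Type*} [Fintype ι] [DecidableEq ι]
    [Semiring α] {i j : ι} (hne : i ≠ j) (a b c d : α) :
    (single i i a + single i j b) * (single i j c + single j j d) = single i j (a * c + b * d) := by
  simp [add_mul, mul_add, hne, hne.symm, single_add]

variable {ι K : Type*} [Fintype ι] [DecidableEq ι] [Field K]

theorem linearIndependent_of_mulVec_eq_ite {m : Type*} [Fintype m] {F : ι → Matrix m m K}
    {v : ι → m → K} (hFv : ∀ i j, F i *ᵥ v j = if i = j then v j else 0) (hv : ∀ i, v i ≠ 0) :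
    LinearIndependent K v := by
  rw [Fintype.linearIndependent_iff]
  intro c hc j
  have h := congrArg (F j *ᵥ ·) hc
  simp only [mulVec_sum, mulVec_smul, hFv, smul_ite, smul_zero, Finset.sum_ite_eq,
    Finset.mem_univ, if_true, mulVec_zero] at h
  exact (smul_eq_zero.mp h).resolve_right (hv j)

theorem exists_inv_mul_mul_eq_single {F : ι → Matrix ι ι K}
    (he : OrthogonalIdempotents F) (hF : ∀ i, F i ≠ 0) :
    ∃ S : Matrix ι ι K, IsUnit S.det ∧ ∀ i, S⁻¹ * F i * S = single i i 1 := by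
  have hx : ∀ i, ∃ x, F i *ᵥ x ≠ 0 := fun i => by
    by_contra! h
    exact hF i (ext fun k l => by simpa [mulVec_single] using congrFun (h (Pi.single l 1)) k)
  choose x hx using hx
  set v := fun i => F i *ᵥ x i
  have hFv : ∀ i j, F i *ᵥ v j = if i = j then v j else 0 := by
    intro i j
    simp only [v, mulVec_mulVec, he.mul_eq]
    split_ifs with h
    · rw [h]
    · exact zero_mulVec _
  have hS : IsUnit (of v)ᵀ.det := (isUnit_iff_isUnit_det _).mp <|
    linearIndependent_cols_iff_isUnit.mp (linearIndependent_of_mulVec_eq_ite hFv hx)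
  refine ⟨(of v)ᵀ, hS, fun i => ?_⟩
  rw [mul_assoc, ← nonsing_inv_mul_cancel_left (A := (of v)ᵀ) (single i i 1) hS]
  congr 1
  ext k l
  change (F i *ᵥ v l) k = _
  rw [hFv]
  by_cases hl : l = i
  · subst hl
    simp
  · rw [if_neg (Ne.symm hl), mul_single_apply_of_ne _ _ _ _ _ hl, Pi.zero_apply]

theorem completeOrthogonalIdempotents_of_ne_zero {F : ι → Matrix ι ι K}
    (he : OrthogonalIdempotents F) (hF : ∀ i, F i ≠ 0) : CompleteOrthogonalIdempotents F := by
  obtain ⟨S, hS, hSF⟩ := exists_inv_mul_mul_eq_single he hF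
  have hconj : ∀ i, F i = S * single i i 1 * S⁻¹ := fun i => by
    simp only [← hSF i, mul_assoc, mul_nonsing_inv _ hS, mul_one,
      mul_nonsing_inv_cancel_left _ _ hS]
  refine ⟨he, ?_⟩
  simp_rw [hconj, ← Finset.sum_mul, ← Finset.mul_sum, sum_single_one, mul_one,
    mul_nonsing_inv _ hS]

theorem mul_nonsing_inv_mul_mul_mul_nonsing_inv {S : Matrix ι ι K} (hS : IsUnit S.det)
    (Z : Matrix ι ι K) : S * (S⁻¹ * Z * S) * S⁻¹ = Z := by
  rw [← mul_assoc, mul_assoc _ S, mul_nonsing_inv _ hS, mul_one,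
    mul_nonsing_inv_cancel_left _ _ hS]

end Matrix

namespace structuralMatrixAlgebra

variable {n : ℕ} {ρ : Fin n → Fin n → Prop}

theorem zero_mem : (0 : Matrix (Fin n) (Fin n) ℂ) ∈ structuralMatrixAlgebra ρ :=
  fun _ _ _ => rfl

theorem add_mem {X Y : Matrix (Fin n) (Fin n) ℂ} (hX : X ∈ structuralMatrixAlgebra ρ)
    (hY : Y ∈ structuralMatrixAlgebra ρ) : X + Y ∈ structuralMatrixAlgebra ρ :=
  fun i j h => by rw [Matrix.add_apply, hX i j h, hY i j h, add_zero]

theorem mul_mem (htrans : ∀ i j k, ρ i j → ρ j k → ρ i k) {X Y : Matrix (Fin n) (Fin n) ℂ}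
    (hX : X ∈ structuralMatrixAlgebra ρ) (hY : Y ∈ structuralMatrixAlgebra ρ) :
    X * Y ∈ structuralMatrixAlgebra ρ := by
  intro i j hij
  rw [mul_apply]
  refine Finset.sum_eq_zero fun k _ => ?_
  by_cases hik : ρ i k
  · rw [hY k j fun hkj => hij (htrans i k j hik hkj), mul_zero]
  · rw [hX i k hik, zero_mul]

theorem single_mem {i j : Fin n} (h : ρ i j) (c : ℂ) :
    single i j c ∈ structuralMatrixAlgebra ρ := by
  intro k l hkl
  apply single_apply_of_ne
  rintro ⟨rfl, rfl⟩
  exact hkl h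

variable {φ : Matrix (Fin n) (Fin n) ℂ → Matrix (Fin n) (Fin n) ℂ}

theorem orthogonalIdempotents_map_single_sub_map_zero (hrefl : ∀ i, ρ i i)
    (hmul : ∀ X ∈ structuralMatrixAlgebra ρ, ∀ Y ∈ structuralMatrixAlgebra ρ,
      φ (X * Y) = φ X * φ Y) :
    OrthogonalIdempotents fun i => φ (single i i 1) - φ 0 := by
  have hE : ∀ i, single i i (1 : ℂ) ∈ structuralMatrixAlgebra ρ :=
    fun i => single_mem (hrefl i) 1
  have hleft : ∀ X ∈ structuralMatrixAlgebra ρ, φ 0 * φ X = φ 0 := fun X hX => by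
    rw [← hmul 0 zero_mem X hX, zero_mul]
  have hright : ∀ X ∈ structuralMatrixAlgebra ρ, φ X * φ 0 = φ 0 := fun X hX => by
    rw [← hmul X hX 0 zero_mem, mul_zero]
  rw [OrthogonalIdempotents.iff_mul_eq]
  intro i j
  have hEE : φ (single i i 1) * φ (single j j 1) = if i = j then φ (single i i 1) else φ 0 := by
    rw [← hmul _ (hE i) _ (hE j)]
    split_ifs with h
    · rw [h, single_mul_single_same, one_mul]
    · rw [single_mul_single_of_ne _ _ _ _ h]
  simp only [sub_mul, mul_sub, hEE, hleft _ (hE j), hright _ (hE i), hleft _ zero_mem]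
  split_ifs <;> abel

theorem map_single_sub_map_zero_ne_zero (hrefl : ∀ i, ρ i i)
    (hinj : Set.InjOn φ (structuralMatrixAlgebra ρ)) (i : Fin n) :
    φ (single i i 1) - φ 0 ≠ 0 := fun h => by
  have := hinj (single_mem (hrefl i) 1) zero_mem (sub_eq_zero.mp h)
  simpa using congrFun (congrFun this i) i

theorem map_zero_eq_zero (hrefl : ∀ i, ρ i i) (hinj : Set.InjOn φ (structuralMatrixAlgebra ρ))
    (hmul : ∀ X ∈ structuralMatrixAlgebra ρ, ∀ Y ∈ structuralMatrixAlgebra ρ,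
      φ (X * Y) = φ X * φ Y) :
    φ 0 = 0 := by
  have hcomplete := completeOrthogonalIdempotents_of_ne_zero
    (orthogonalIdempotents_map_single_sub_map_zero hrefl hmul)
    (map_single_sub_map_zero_ne_zero hrefl hinj)
  have hleft : ∀ X ∈ structuralMatrixAlgebra ρ, φ 0 * φ X = φ 0 := fun X hX => by
    rw [← hmul 0 zero_mem X hX, zero_mul]
  calc φ 0 = φ 0 * ∑ i, (φ (single i i 1) - φ 0) := by rw [hcomplete.complete, mul_one]
    _ = 0 := by
      simp only [Finset.mul_sum, mul_sub, hleft _ (single_mem (hrefl _) 1), hleft _ zero_mem,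
        sub_self, Finset.sum_const_zero]

structure IsNormalizedMulMap (ρ : Fin n → Fin n → Prop)
    (ψ : Matrix (Fin n) (Fin n) ℂ → Matrix (Fin n) (Fin n) ℂ) : Prop where
  injOn : Set.InjOn ψ (structuralMatrixAlgebra ρ)
  map_mul : ∀ X ∈ structuralMatrixAlgebra ρ, ∀ Y ∈ structuralMatrixAlgebra ρ,
    ψ (X * Y) = ψ X * ψ Y
  map_zero : ψ 0 = 0
  map_single_self : ∀ i, ψ (single i i 1) = single i i 1

theorem exists_isNormalizedMulMap_conj (hrefl : ∀ i, ρ i i)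
    (hinj : Set.InjOn φ (structuralMatrixAlgebra ρ))
    (hmul : ∀ X ∈ structuralMatrixAlgebra ρ, ∀ Y ∈ structuralMatrixAlgebra ρ,
      φ (X * Y) = φ X * φ Y) :
    ∃ S : Matrix (Fin n) (Fin n) ℂ,
      IsUnit S.det ∧ IsNormalizedMulMap ρ (fun Z => S⁻¹ * φ Z * S) := by
  have hφ0 := map_zero_eq_zero hrefl hinj hmul
  obtain ⟨S, hS, hSE⟩ := exists_inv_mul_mul_eq_single
    (orthogonalIdempotents_map_single_sub_map_zero hrefl hmul)
    (map_single_sub_map_zero_ne_zero hrefl hinj)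
  refine ⟨S, hS, fun X hX Y hY h => hinj hX hY ?_, fun X hX Y hY => ?_, ?_, fun i => ?_⟩
  · rw [← mul_nonsing_inv_mul_mul_mul_nonsing_inv hS (φ X),
      ← mul_nonsing_inv_mul_mul_mul_nonsing_inv hS (φ Y)]
    exact congrArg (S * · * S⁻¹) h
  · simp only [hmul X hX Y hY, mul_assoc, mul_nonsing_inv_cancel_left _ _ hS]
  · simp only [hφ0, mul_zero, zero_mul]
  · simpa only [hφ0, sub_zero] using hSE i

def entryMap (ψ : Matrix (Fin n) (Fin n) ℂ → Matrix (Fin n) (Fin n) ℂ) (i j : Fin n) (c : ℂ) :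
    ℂ :=
  ψ (single i j c) i j

namespace IsNormalizedMulMap

variable {ψ : Matrix (Fin n) (Fin n) ℂ → Matrix (Fin n) (Fin n) ℂ} {i j k : Fin n}

theorem map_single_mul_mul_single (hψ : IsNormalizedMulMap ρ ψ) (hrefl : ∀ i, ρ i i)
    (htrans : ∀ i j k, ρ i j → ρ j k → ρ i k)
    {X : Matrix (Fin n) (Fin n) ℂ} (hX : X ∈ structuralMatrixAlgebra ρ) (i j : Fin n) :
    ψ (single i i 1 * X * single j j 1) = single i i 1 * ψ X * single j j 1 := by
  have hEi := single_mem (hrefl i) 1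
  rw [hψ.map_mul _ (mul_mem htrans hEi hX) _ (single_mem (hrefl j) 1), hψ.map_mul _ hEi _ hX,
    hψ.map_single_self, hψ.map_single_self]

theorem map_single (hψ : IsNormalizedMulMap ρ ψ) (hrefl : ∀ i, ρ i i)
    (htrans : ∀ i j k, ρ i j → ρ j k → ρ i k)
    (h : ρ i j) (c : ℂ) : ψ (single i j c) = single i j (entryMap ψ i j c) := by
  simpa [entryMap] using hψ.map_single_mul_mul_single hrefl htrans (single_mem h c) i j

theorem apply_eq_entryMap (hψ : IsNormalizedMulMap ρ ψ) (hrefl : ∀ i, ρ i i)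
    (htrans : ∀ i j k, ρ i j → ρ j k → ρ i k)
    {X : Matrix (Fin n) (Fin n) ℂ} (hX : X ∈ structuralMatrixAlgebra ρ) (k l : Fin n) :
    ψ X k l = entryMap ψ k l (X k l) := by
  have := congrFun (congrFun (hψ.map_single_mul_mul_single hrefl htrans hX k l) k) l
  simpa [entryMap] using this.symm

theorem entryMap_zero (hψ : IsNormalizedMulMap ρ ψ) : entryMap ψ i j 0 = 0 := by
  simp [entryMap, hψ.map_zero]

theorem entryMap_mul (hψ : IsNormalizedMulMap ρ ψ) (hrefl : ∀ i, ρ i i)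
    (htrans : ∀ i j k, ρ i j → ρ j k → ρ i k) (hij : ρ i j) (hjk : ρ j k) (c d : ℂ) :
    entryMap ψ i k (c * d) = entryMap ψ i j c * entryMap ψ j k d := by
  have h := hψ.map_mul _ (single_mem hij c) _ (single_mem hjk d)
  rw [single_mul_single_same, hψ.map_single hrefl htrans (htrans i j k hij hjk),
    hψ.map_single hrefl htrans hij, hψ.map_single hrefl htrans hjk, single_mul_single_same] at h
  simpa using congrFun (congrFun h i) k

theorem entryMap_injective (hψ : IsNormalizedMulMap ρ ψ) (hrefl : ∀ i, ρ i i)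
    (htrans : ∀ i j k, ρ i j → ρ j k → ρ i k) (hij : ρ i j) :
    Function.Injective (entryMap ψ i j) := fun c d hcd => by
  have h := hψ.injOn (single_mem hij c) (single_mem hij d) <| by
    rw [hψ.map_single hrefl htrans hij, hψ.map_single hrefl htrans hij, hcd]
  simpa using congrFun (congrFun h i) j

theorem entryMap_one_ne_zero (hψ : IsNormalizedMulMap ρ ψ) (hrefl : ∀ i, ρ i i)
    (htrans : ∀ i j k, ρ i j → ρ j k → ρ i k) (hij : ρ i j) : entryMap ψ i j 1 ≠ 0 :=
  fun h => one_ne_zero <| hψ.entryMap_injective hrefl htrans hij (h.trans hψ.entryMap_zero.symm)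

theorem map_single_add_single (hψ : IsNormalizedMulMap ρ ψ) (hrefl : ∀ i, ρ i i)
    (htrans : ∀ i j k, ρ i j → ρ j k → ρ i k) {l : Fin n} (hij : ρ i j) (hkl : ρ k l)
    (hne : (i, j) ≠ (k, l)) (c d : ℂ) :
    ψ (single i j c + single k l d) =
      single i j (entryMap ψ i j c) + single k l (entryMap ψ k l d) := by
  ext a b
  rw [hψ.apply_eq_entryMap hrefl htrans (add_mem (single_mem hij c) (single_mem hkl d))]
  simp only [Matrix.add_apply, single_apply]
  split_ifs <;> simp_all [hψ.entryMap_zero]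

theorem entryMap_add_of_ne (hψ : IsNormalizedMulMap ρ ψ) (hrefl : ∀ i, ρ i i)
    (htrans : ∀ i j k, ρ i j → ρ j k → ρ i k) (hij : ρ i j) (hne : i ≠ j) (c d : ℂ) :
    entryMap ψ i j (c + d) = entryMap ψ i j c + entryMap ψ i j d := by
  have hX := add_mem (single_mem (hrefl i) c) (single_mem hij 1)
  have hY := add_mem (single_mem hij 1) (single_mem (hrefl j) d)
  have h := hψ.map_mul _ hX _ hY
  rw [single_add_single_mul_single_add_single hne, mul_one, one_mul,
    hψ.map_single hrefl htrans hij,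
    hψ.map_single_add_single hrefl htrans (hrefl i) hij (by simp [hne]),
    hψ.map_single_add_single hrefl htrans hij (hrefl j) (by simp [hne]),
    single_add_single_mul_single_add_single hne] at h
  rw [← hψ.entryMap_mul hrefl htrans (hrefl i) hij,
    ← hψ.entryMap_mul hrefl htrans hij (hrefl j), mul_one, one_mul] at h
  simpa using congrFun (congrFun h i) j

theorem entryMap_self_add (hψ : IsNormalizedMulMap ρ ψ) (hrefl : ∀ i, ρ i i)
    (htrans : ∀ i j k, ρ i j → ρ j k → ρ i k) (hki : k ≠ i) (hik : ρ i k ∨ ρ k i) (c d : ℂ) :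
    entryMap ψ i i (c + d) = entryMap ψ i i c + entryMap ψ i i d := by
  rcases hik with hik | hki'
  · apply mul_right_cancel₀ (hψ.entryMap_one_ne_zero hrefl htrans hik)
    simp only [add_mul, ← hψ.entryMap_mul hrefl htrans (hrefl i) hik, mul_one]
    exact hψ.entryMap_add_of_ne hrefl htrans hik hki.symm c d
  · apply mul_left_cancel₀ (hψ.entryMap_one_ne_zero hrefl htrans hki')
    simp only [mul_add, ← hψ.entryMap_mul hrefl htrans hki' (hrefl i), one_mul]
    exact hψ.entryMap_add_of_ne hrefl htrans hki' hki c d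

theorem map_add (hψ : IsNormalizedMulMap ρ ψ) (hrefl : ∀ i, ρ i i)
    (htrans : ∀ i j k, ρ i j → ρ j k → ρ i k) (hnbr : ∀ i, ∃ k ≠ i, ρ i k ∨ ρ k i)
    {X Y : Matrix (Fin n) (Fin n) ℂ} (hX : X ∈ structuralMatrixAlgebra ρ)
    (hY : Y ∈ structuralMatrixAlgebra ρ) : ψ (X + Y) = ψ X + ψ Y := by
  ext k l
  rw [Matrix.add_apply, hψ.apply_eq_entryMap hrefl htrans (add_mem hX hY),
    hψ.apply_eq_entryMap hrefl htrans hX, hψ.apply_eq_entryMap hrefl htrans hY, Matrix.add_apply]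
  by_cases hkl : ρ k l
  · rcases eq_or_ne k l with rfl | hne
    · obtain ⟨m, hmk, hnb⟩ := hnbr k
      exact hψ.entryMap_self_add hrefl htrans hmk hnb _ _
    · exact hψ.entryMap_add_of_ne hrefl htrans hkl hne _ _
  · rw [hX k l hkl, hY k l hkl, add_zero, hψ.entryMap_zero, add_zero]

end IsNormalizedMulMap

theorem exists_ne_of_centralRel {i j : Fin n} (h : centralRel ρ i j) (hne : j ≠ i) :
    ∃ k ≠ i, ρ i k ∨ ρ k i := by
  by_contra! hno
  induction h with
  | refl => exact hne rfl
  | @tail b c _ hbc ih =>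
    obtain rfl : b = i := not_not.mp ih
    exact hbc.elim (hno c hne).1 (hno c hne).2

end structuralMatrixAlgebra

/-- If every central class of the structural matrix algebra `A_ρ`
has at least 2 elements, then every injective multiplicative map
`φ : A_ρ → M_n(ℂ)` is additive. -/
theorem multiplicative_map_additive {n : ℕ} (ρ : Fin n → Fin n → Prop)
    (hrefl : ∀ i, ρ i i) (htrans : ∀ i j k, ρ i j → ρ j k → ρ i k)
    (hclass : ∀ i : Fin n, ∃ j, j ≠ i ∧ centralRel ρ i j)
    (φ : Matrix (Fin n) (Fin n) ℂ → Matrix (Fin n) (Fin n) ℂ)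
    (hinj : Set.InjOn φ (structuralMatrixAlgebra ρ))
    (hmul : ∀ X ∈ structuralMatrixAlgebra ρ, ∀ Y ∈ structuralMatrixAlgebra ρ,
      φ (X * Y) = φ X * φ Y) :
    ∀ X ∈ structuralMatrixAlgebra ρ, ∀ Y ∈ structuralMatrixAlgebra ρ,
      φ (X + Y) = φ X + φ Y := by
  obtain ⟨S, hS, hψ⟩ :=
    structuralMatrixAlgebra.exists_isNormalizedMulMap_conj hrefl hinj hmul
  have hnbr : ∀ i, ∃ k ≠ i, ρ i k ∨ ρ k i := fun i => by
    obtain ⟨j, hji, hij⟩ := hclass i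
    exact structuralMatrixAlgebra.exists_ne_of_centralRel hij hji
  intro X hX Y hY
  have h : S⁻¹ * φ (X + Y) * S = S⁻¹ * φ X * S + S⁻¹ * φ Y * S :=
    hψ.map_add hrefl htrans hnbr hX hY
  rw [← add_mul, ← mul_add] at h
  rw [← mul_nonsing_inv_mul_mul_mul_nonsing_inv hS (φ (X + Y)), h,
    mul_nonsing_inv_mul_mul_mul_nonsing_inv hS]
end
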